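/- arXiv:math/0107027 — 3 statements merged into one kernel-verified Lean document; each statement's English description precedes it below -/
import Mathlib

section
/- Let α ∈ Σ_0 be the dimension vector of a simple representation of the preprojective algebra Π_0 of the quiver Q, and let v be a vertex of Q with α ≠ ε_v (the v-th standard basis vector). Then χ(α,ε_v) + χ(ε_v,α) ≤ 0. In particular, if there are no loops at v, then 2·α_v is at most the sum over all arrows of Q incident to v of the coordinate of α at the other endpoint. -/
/-! ## Quivers with a fixed finite vertex set `Fin k` -/

/-- A finite quiver on vertex set `Fin k`: a finite type of arrows with
source and target maps.  Loops and multiple arrows are allowed. -/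
structure FinQuiver (k : ℕ) where
  Arrow : Type
  [instFintypeArrow : Fintype Arrow]
  src : Arrow → Fin k
  tgt : Arrow → Fin k

attribute [instance] FinQuiver.instFintypeArrow

namespace FinQuiver

variable {k : ℕ}

/-- Arrows of the double quiver `Q̄`: `Sum.inl a` is the original arrow `a`,
`Sum.inr a` is the reversed arrow `a*`. -/
abbrev DArrow (Q : FinQuiver k) : Type := Q.Arrow ⊕ Q.Arrow

/-- Source map of the double quiver. -/
def dsrc (Q : FinQuiver k) : Q.DArrow → Fin k := Sum.elim Q.src Q.tgt

/-- Target map of the double quiver. -/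
def dtgt (Q : FinQuiver k) : Q.DArrow → Fin k := Sum.elim Q.tgt Q.src

/-- A vertex is loop-free if no arrow of `Q` is a loop at it. -/
def LoopFreeAt (Q : FinQuiver k) (i : Fin k) : Prop :=
  ∀ a : Q.Arrow, ¬ (Q.src a = i ∧ Q.tgt a = i)

end FinQuiver

/-! ## Representations of the deformed preprojective algebra -/

/-- The total space `⊕ᵢ ℂ^{α i}` of an `α`-dimensional representation. -/
abbrev TotSpace {k : ℕ} (α : Fin k → ℕ) : Type := (i : Fin k) → (Fin (α i) → ℂ)

/-- A representation of the deformed preprojective algebra `Π_λ` of the quiver `Q`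
of dimension vector `α`.  An arrow `b` of the double quiver acts by a linear map
on the total space which depends only on the component at `dsrc b` and lands in
the component at `dtgt b`; this encodes a linear map `ℂ^{α (dsrc b)} → ℂ^{α (dtgt b)}`.
The field `relation` encodes the deformed preprojective relations
`∑_{a, t(a)=i} X_a X_{a*} - ∑_{a, s(a)=i} X_{a*} X_a = λ_i · Id` at every vertex `i`. -/
structure PiRep {k : ℕ} (Q : FinQuiver k) (lam : Fin k → ℚ) (α : Fin k → ℕ) where
  X : Q.DArrow → (TotSpace α →ₗ[ℂ] TotSpace α)
  X_tgt : ∀ (b : Q.DArrow) (v : TotSpace α) (i : Fin k), i ≠ Q.dtgt b → X b v i = 0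
  X_src : ∀ (b : Q.DArrow) (v w : TotSpace α), v (Q.dsrc b) = w (Q.dsrc b) → X b v = X b w
  relation : ∀ (v : TotSpace α) (i : Fin k),
    (∑ a : Q.Arrow, X (Sum.inl a) (X (Sum.inr a) v) i)
      - (∑ a : Q.Arrow, X (Sum.inr a) (X (Sum.inl a) v) i)
      = ((lam i : ℚ) : ℂ) • v i

namespace PiRep

variable {k : ℕ} {Q : FinQuiver k} {lam : Fin k → ℚ} {α : Fin k → ℕ}

/-- A family of subspaces `U i ⊆ ℂ^{α i}` is invariant under the representation if
`X_b (U_{s(b)}) ⊆ U_{t(b)}` for every arrow `b` of the double quiver. -/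
def Invariant (R : PiRep Q lam α) (U : (i : Fin k) → Submodule ℂ (Fin (α i) → ℂ)) : Prop :=
  ∀ (b : Q.DArrow) (v : TotSpace α),
    v (Q.dsrc b) ∈ U (Q.dsrc b) → R.X b v (Q.dtgt b) ∈ U (Q.dtgt b)

/-- A representation is simple if the only invariant families of subspaces are the
all-zero family and the all-full family. -/
def IsSimple (R : PiRep Q lam α) : Prop :=
  ∀ U : (i : Fin k) → Submodule ℂ (Fin (α i) → ℂ),
    R.Invariant U → (∀ i, U i = ⊥) ∨ (∀ i, U i = ⊤)

end PiRep

/-- Isomorphism of representations: linear isomorphisms of the vertex spaces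
intertwining the action of every arrow of the double quiver. -/
def RepIso {k : ℕ} {Q : FinQuiver k} {lam : Fin k → ℚ} {α β : Fin k → ℕ}
    (R : PiRep Q lam α) (S : PiRep Q lam β) : Prop :=
  ∃ g : (i : Fin k) → ((Fin (α i) → ℂ) ≃ₗ[ℂ] (Fin (β i) → ℂ)),
    ∀ (b : Q.DArrow) (v : TotSpace α) (i : Fin k),
      S.X b (fun j => g j (v j)) i = g i (R.X b v i)

/-- `Σ_λ`: the set of nonzero dimension vectors of simple representations of `Π_λ`. -/
def SigmaSet {k : ℕ} (Q : FinQuiver k) (lam : Fin k → ℚ) : Set (Fin k → ℕ) :=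
  { α | α ≠ 0 ∧ ∃ R : PiRep Q lam α, R.IsSimple }

/-! ## The Euler form -/

/-- The Euler form of the quiver `Q`. -/
def eulerZ {k : ℕ} (Q : FinQuiver k) (x y : Fin k → ℤ) : ℤ :=
  (∑ i, x i * y i) - ∑ a : Q.Arrow, x (Q.src a) * y (Q.tgt a)

/-- The Euler form on dimension vectors. -/
def eulerN {k : ℕ} (Q : FinQuiver k) (x y : Fin k → ℕ) : ℤ :=
  eulerZ Q (fun i => (x i : ℤ)) (fun i => (y i : ℤ))

/-- `p(α) = 1 - χ(α,α)`. -/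
def pN {k : ℕ} (Q : FinQuiver k) (x : Fin k → ℕ) : ℤ := 1 - eulerN Q x x

/-! ## Graphs (with multiplicities) -/

/-- A multigraph on a vertex type `V` is recorded by its symmetric edge-count
function; `G i i` is the number of loops at `i`. -/
abbrev MultiGraph (V : Type) := V → V → ℕ

/-- The graph `G_B` associated to a family `B = (β_i)` of dimension vectors:
`2 p(β_i)` loops at the vertex `w_i` and `-χ(β_i,β_j) - χ(β_j,β_i)` edges
between `w_i` and `w_j` for `i ≠ j`. -/
def GB {k : ℕ} {V : Type} [DecidableEq V] (Q : FinQuiver k) (β : V → (Fin k → ℕ)) :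
    MultiGraph V :=
  fun i j =>
    if i = j then (2 * pN Q (β i)).toNat
    else (- eulerN Q (β i) (β j) - eulerN Q (β j) (β i)).toNat

/-- The underlying graph of a quiver: one edge between `i` and `j` per arrow
between them, one loop at `i` per loop of `Q` at `i`. -/
def underlying {k : ℕ} (Q : FinQuiver k) : MultiGraph (Fin k) :=
  fun i j =>
    Fintype.card {a : Q.Arrow // (Q.src a = i ∧ Q.tgt a = j) ∨ (Q.src a = j ∧ Q.tgt a = i)}

/-! ## Tame settings: the extended Dynkin graphs with their minimal imaginary roots -/

/-- A (candidate) tame setting: a multigraph on `Fin n` together with a vector. -/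
structure TameSetting where
  n : ℕ
  graph : MultiGraph (Fin n)
  delta : Fin n → ℕ

/-- The graph on `Fin n` whose edges are the entries of the list `L`
(an entry `(i,j)` is one edge between `i` and `j`). -/
def graphOfList {n : ℕ} (L : List (Fin n × Fin n)) : MultiGraph (Fin n) :=
  fun i j => L.count (i, j) + L.count (j, i)

/-- `Ã_m` (`m ≥ 1`): a cycle on `m+1` vertices, `δ = (1,…,1)`. -/
def AtildeS (m : ℕ) : TameSetting where
  n := m + 1
  graph := fun i j => (if j = i + 1 then 1 else 0) + (if i = j + 1 then 1 else 0)
  delta := fun _ => 1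

/-- Adjacency (as `ℕ`-labels) for `D̃_m`: central path `2, 3, …, m-2`,
pendant vertices `0, 1` attached to `2` and `m-1, m` attached to `m-2`. -/
def dAdj (m a b : ℕ) : Bool :=
  (a == 0 && b == 2) || (a == 1 && b == 2) || (a == m - 1 && b == m - 2) ||
    (a == m && b == m - 2) || (2 ≤ a && a + 1 ≤ m - 2 && b == a + 1)

/-- `D̃_m` (`m ≥ 4`) with `δ` equal to `2` on the path vertices and `1` on the
four pendant vertices. -/
def DtildeS (m : ℕ) : TameSetting where
  n := m + 1
  graph := fun i j => if dAdj m i.val j.val || dAdj m j.val i.val then 1 else 0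
  delta := fun i => if i.val ≤ 1 ∨ m - 1 ≤ i.val then 1 else 2

/-- `Ẽ_6`: star with three arms of length 2; centre `0`, arms `(1,2)`, `(3,4)`, `(5,6)`. -/
def E6S : TameSetting where
  n := 7
  graph := graphOfList [(0,1), (1,2), (0,3), (3,4), (0,5), (5,6)]
  delta := ![3, 2, 1, 2, 1, 2, 1]

/-- `Ẽ_7`: star with arms of lengths 3, 3, 1; centre `0`, long arms `(1,2,3)` and
`(4,5,6)`, short arm `7`. -/
def E7S : TameSetting where
  n := 8
  graph := graphOfList [(0,1), (1,2), (2,3), (0,4), (4,5), (5,6), (0,7)]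
  delta := ![4, 3, 2, 1, 3, 2, 1, 2]

/-- `Ẽ_8`: star with arms of lengths 5, 2, 1; centre `0`, long arm `(1,2,3,4,5)`,
middle arm `(6,7)`, short arm `8`. -/
def E8S : TameSetting where
  n := 9
  graph := graphOfList [(0,1), (1,2), (2,3), (3,4), (4,5), (0,6), (6,7), (0,8)]
  delta := ![6, 5, 4, 3, 2, 1, 4, 2, 3]

/-- The list of tame settings `(D, δ)`: extended Dynkin graphs with their
minimal imaginary roots. -/
def IsTame (T : TameSetting) : Prop :=
  (∃ m, 1 ≤ m ∧ T = AtildeS m) ∨ (∃ m, 4 ≤ m ∧ T = DtildeS m) ∨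
    T = E6S ∨ T = E7S ∨ T = E8S

/-- `(D, δ)` is contained in `(G, α)`: `D` occurs as a subgraph of `G`
(via an injective map of vertices, respecting edge multiplicities) and
`δ ≤ α` on the vertices of `D`. -/
def ContainedIn {V : Type} (T : TameSetting) (G : MultiGraph V) (α : V → ℕ) : Prop :=
  ∃ f : Fin T.n → V, Function.Injective f ∧
    (∀ i j, T.graph i j ≤ G (f i) (f j)) ∧ (∀ i, T.delta i ≤ α (f i))

/-! ## Roots of a quiver -/

/-- The standard basis vector `ε_v`. -/
def epsZ {k : ℕ} (v : Fin k) : Fin k → ℤ := fun j => if j = v then 1 else 0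

/-- The reflection `s_i(x) = x - (χ(x,ε_i) + χ(ε_i,x)) ε_i` at a vertex `i`. -/
def reflAt {k : ℕ} (Q : FinQuiver k) (i : Fin k) (x : Fin k → ℤ) : Fin k → ℤ :=
  fun j => x j - (eulerZ Q x (epsZ i) + eulerZ Q (epsZ i) x) * epsZ i j

/-- The real roots of `Q`: the Weyl group orbits of the `ε_i` at loop-free vertices. -/
inductive IsRealRoot {k : ℕ} (Q : FinQuiver k) : (Fin k → ℤ) → Prop
  | base (i : Fin k) : Q.LoopFreeAt i → IsRealRoot Q (epsZ i)
  | refl (i : Fin k) (x : Fin k → ℤ) : Q.LoopFreeAt i → IsRealRoot Q x →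
      IsRealRoot Q (reflAt Q i x)

/-- `y` is obtained from `x` by applying a Weyl group element (a sequence of
reflections at loop-free vertices). -/
inductive WeylEquiv {k : ℕ} (Q : FinQuiver k) : (Fin k → ℤ) → (Fin k → ℤ) → Prop
  | refl (x : Fin k → ℤ) : WeylEquiv Q x x
  | step (i : Fin k) (x y : Fin k → ℤ) : Q.LoopFreeAt i → WeylEquiv Q x y →
      WeylEquiv Q x (reflAt Q i y)

/-- `i` and `j` are adjacent in `Q` (there is an arrow between them). -/
def QAdj {k : ℕ} (Q : FinQuiver k) (i j : Fin k) : Prop :=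
  ∃ a : Q.Arrow, (Q.src a = i ∧ Q.tgt a = j) ∨ (Q.src a = j ∧ Q.tgt a = i)

/-- The fundamental region: nonzero, nonnegative, connected support, and
`χ(x,ε_i) + χ(ε_i,x) ≤ 0` for every vertex `i`. -/
def InFund {k : ℕ} (Q : FinQuiver k) (x : Fin k → ℤ) : Prop :=
  x ≠ 0 ∧ (∀ i, 0 ≤ x i) ∧
    (∀ i j, x i ≠ 0 → x j ≠ 0 →
      Relation.ReflTransGen (fun u v => QAdj Q u v ∧ x u ≠ 0 ∧ x v ≠ 0) i j) ∧
    (∀ i, eulerZ Q x (epsZ i) + eulerZ Q (epsZ i) x ≤ 0)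

/-- The imaginary roots: `± w(x)` for `w` in the Weyl group and `x` in the
fundamental region. -/
def IsImagRoot {k : ℕ} (Q : FinQuiver k) (x : Fin k → ℤ) : Prop :=
  ∃ y, InFund Q y ∧ (WeylEquiv Q y x ∨ WeylEquiv Q y (-x))

/-- The roots of `Q`. -/
def IsRoot {k : ℕ} (Q : FinQuiver k) (x : Fin k → ℤ) : Prop :=
  IsRealRoot Q x ∨ IsImagRoot Q x
section Aux

open Module LinearMap

variable {k : ℕ} {Q : FinQuiver k} {lam : Fin k → ℚ} {α : Fin k → ℕ}

/-- Cast between vertex spaces along an equality of vertices. -/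
noncomputable def castE (α : Fin k → ℕ) {i j : Fin k} (h : i = j) :
    (Fin (α i) → ℂ) ≃ₗ[ℂ] (Fin (α j) → ℂ) := by subst h; exact LinearEquiv.refl ℂ _

@[simp] lemma castE_rfl {i : Fin k} (h : i = i) (u : Fin (α i) → ℂ) :
    castE α h u = u := rfl

lemma castE_symm_apply {i j : Fin k} (h : i = j) (u : Fin (α i) → ℂ) :
    castE α h.symm (castE α h u) = u := by subst h; rfl

lemma castE_trans {i j l : Fin k} (h1 : i = j) (h2 : j = l) (u : Fin (α i) → ℂ) :
    castE α h2 (castE α h1 u) = castE α (h1.trans h2) u := by subst h1; subst h2; rfl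

/-- The local linear map attached to an arrow of the double quiver. -/
noncomputable def phi (R : PiRep Q lam α) (b : Q.DArrow) :
    (Fin (α (Q.dsrc b)) → ℂ) →ₗ[ℂ] (Fin (α (Q.dtgt b)) → ℂ) :=
  (LinearMap.proj (Q.dtgt b)).comp ((R.X b).comp
    (LinearMap.single ℂ (fun i => Fin (α i) → ℂ) (Q.dsrc b)))

lemma X_eq (R : PiRep Q lam α) (b : Q.DArrow) (w : TotSpace α) :
    R.X b w = Pi.single (Q.dtgt b) (phi R b (w (Q.dsrc b))) := by
  have hsrc : R.X b w = R.X b (Pi.single (Q.dsrc b) (w (Q.dsrc b))) := by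
    apply R.X_src
    simp
  funext i
  by_cases hi : i = Q.dtgt b
  · subst hi
    rw [Pi.single_eq_same, hsrc]
    rfl
  · rw [R.X_tgt b w i hi, Pi.single_eq_of_ne hi]

/-- Reversal of arrows in the double quiver. -/
def rev (Q : FinQuiver k) : Q.DArrow → Q.DArrow := Sum.elim Sum.inr Sum.inl

@[simp] lemma dsrc_rev (b : Q.DArrow) : Q.dsrc (rev Q b) = Q.dtgt b := by
  cases b <;> rfl

@[simp] lemma dtgt_rev (b : Q.DArrow) : Q.dtgt (rev Q b) = Q.dsrc b := by
  cases b <;> rfl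

@[simp] lemma rev_rev (b : Q.DArrow) : rev Q (rev Q b) = b := by
  cases b <;> rfl

lemma dsrc_inl (a : Q.Arrow) : Q.dsrc (Sum.inl a) = Q.src a := rfl
lemma dtgt_inl (a : Q.Arrow) : Q.dtgt (Sum.inl a) = Q.tgt a := rfl
lemma dsrc_inr (a : Q.Arrow) : Q.dsrc (Sum.inr a) = Q.tgt a := rfl
lemma dtgt_inr (a : Q.Arrow) : Q.dtgt (Sum.inr a) = Q.src a := rfl

/-- The preprojective relation, in terms of the local maps. -/
lemma rel_phi (R : PiRep Q 0 α) (i : Fin k) (u : Fin (α i) → ℂ) :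
    ∑ a : Q.Arrow, (if h : Q.tgt a = i then
        castE α h (phi R (Sum.inl a) (phi R (Sum.inr a) (castE α h.symm u))) else 0)
    = ∑ a : Q.Arrow, (if h : Q.src a = i then
        castE α h (phi R (Sum.inr a) (phi R (Sum.inl a) (castE α h.symm u))) else 0) := by
  have hrel := R.relation (Pi.single i u) i
  simp only [Pi.zero_apply, Rat.cast_zero, zero_smul, sub_eq_zero] at hrel
  have h1 : ∀ a : Q.Arrow, R.X (Sum.inl a) (R.X (Sum.inr a) (Pi.single i u)) i
      = (if h : Q.tgt a = i then
        castE α h (phi R (Sum.inl a) (phi R (Sum.inr a) (castE α h.symm u))) else 0) := by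
    intro a
    rw [X_eq R (Sum.inr a), X_eq R (Sum.inl a)]
    dsimp only [dsrc_inl, dtgt_inl, dsrc_inr, dtgt_inr]
    by_cases h : Q.tgt a = i
    · subst h
      simp
    · rw [dif_neg h]
      simp [Pi.single_eq_of_ne (Ne.symm h)]
  have h2 : ∀ a : Q.Arrow, R.X (Sum.inr a) (R.X (Sum.inl a) (Pi.single i u)) i
      = (if h : Q.src a = i then
        castE α h (phi R (Sum.inr a) (phi R (Sum.inl a) (castE α h.symm u))) else 0) := by
    intro a
    rw [X_eq R (Sum.inl a), X_eq R (Sum.inr a)]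
    dsimp only [dsrc_inl, dtgt_inl, dsrc_inr, dtgt_inr]
    by_cases h : Q.src a = i
    · subst h
      simp
    · rw [dif_neg h]
      simp [Pi.single_eq_of_ne (Ne.symm h)]
  rw [← Finset.sum_congr rfl (fun a _ => h1 a), ← Finset.sum_congr rfl (fun a _ => h2 a)]
  exact hrel

end Aux
section Aux2

open Module LinearMap

lemma sum_subtype_dite {ι M : Type*} [Fintype ι] [AddCommMonoid M] (p : ι → Prop)
    [DecidablePred p] (G : ∀ x, p x → M) :
    ∑ b : {x // p x}, G b.1 b.2 = ∑ x : ι, if h : p x then G x h else 0 := by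
  rw [← Fintype.sum_subtype_add_sum_subtype p (fun x => if h : p x then G x h else 0)]
  have h1 : ∑ b : {x // p x}, (if h : p b.1 then G b.1 h else 0) = ∑ b : {x // p x}, G b.1 b.2 :=
    Finset.sum_congr rfl (fun b _ => dif_pos b.2)
  have h2 : ∑ b : {x // ¬ p x}, (if h : p b.1 then G b.1 h else 0) = 0 :=
    Finset.sum_eq_zero (fun b _ => dif_neg b.2)
  rw [h1, h2, add_zero]

lemma bot_eq_top_imp {n : ℕ} (h : (⊥ : Submodule ℂ (Fin n → ℂ)) = ⊤) : n = 0 := by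
  by_contra hn
  have h1 : (1 : Fin n → ℂ) ∈ (⊥ : Submodule ℂ (Fin n → ℂ)) := h ▸ Submodule.mem_top
  rw [Submodule.mem_bot] at h1
  have := congrFun h1 ⟨0, Nat.pos_of_ne_zero hn⟩
  simp at this

noncomputable instance (Q : FinQuiver k) : DecidableEq Q.Arrow := Classical.decEq _

variable {k : ℕ} {Q : FinQuiver k} {lam : Fin k → ℚ} {α : Fin k → ℕ}

lemma comap_castE_self {v : Fin k} (h : v = v) (p : Submodule ℂ (Fin (α v) → ℂ)) :
    p.comap (castE α h).toLinearMap = p := by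
  ext x; simp [Submodule.mem_comap]

/-- The arrows of the double quiver leaving `v`. -/
abbrev OutT (Q : FinQuiver k) (v : Fin k) := {b : Q.DArrow // Q.dsrc b = v}

/-- The direct sum of the vertex spaces at heads of arrows leaving `v`. -/
abbrev Wsp (Q : FinQuiver k) (α : Fin k → ℕ) (v : Fin k) :=
  (b : OutT Q v) → (Fin (α (Q.dtgt b.1)) → ℂ)

/-- The map `ℂ^{α_v} → ⊕_{b : v → j} ℂ^{α_j}` given by the `X_b`. -/
noncomputable def Amap (R : PiRep Q lam α) (v : Fin k) :
    (Fin (α v) → ℂ) →ₗ[ℂ] Wsp Q α v :=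
  LinearMap.pi fun b => (phi R b.1) ∘ₗ (castE α b.2.symm).toLinearMap

/-- Signs for the map `B`. -/
def sgn {Q : FinQuiver k} : Q.DArrow → ℂ := Sum.elim (fun _ => -1) (fun _ => 1)

/-- The map `⊕_{b : v → j} ℂ^{α_j} → ℂ^{α_v}` given by the `± X_{b*}`. -/
noncomputable def Bmap (R : PiRep Q lam α) (v : Fin k) :
    Wsp Q α v →ₗ[ℂ] (Fin (α v) → ℂ) :=
  ∑ b : OutT Q v, sgn b.1 •
    ((castE α ((dtgt_rev b.1).trans b.2)).toLinearMap ∘ₗ (phi R (rev Q b.1)) ∘ₗ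
      (castE α (dsrc_rev b.1).symm).toLinearMap ∘ₗ (LinearMap.proj b))

lemma Bmap_single (R : PiRep Q lam α) (v : Fin k) (c : OutT Q v)
    (y : Fin (α (Q.dtgt c.1)) → ℂ) :
    Bmap R v (Pi.single c y) = sgn c.1 •
      castE α ((dtgt_rev c.1).trans c.2)
        (phi R (rev Q c.1) (castE α (dsrc_rev c.1).symm y)) := by
  rw [Bmap, LinearMap.sum_apply]
  rw [Finset.sum_eq_single c]
  · simp
  · intro c' _ hc'
    have hz : Pi.single (M := fun b : OutT Q v => Fin (α (Q.dtgt b.1)) → ℂ) c y c' = 0 :=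
      by rw [Pi.single_eq_of_ne hc']
    simp [hz]
  · intro h; exact absurd (Finset.mem_univ c) h

lemma BA_zero (R : PiRep Q 0 α) (v : Fin k) (u : Fin (α v) → ℂ) :
    Bmap R v (Amap R v u) = 0 := by
  rw [Bmap, LinearMap.sum_apply]
  have step1 : ∀ b : OutT Q v,
      (sgn b.1 • ((castE α ((dtgt_rev b.1).trans b.2)).toLinearMap ∘ₗ (phi R (rev Q b.1)) ∘ₗ
        (castE α (dsrc_rev b.1).symm).toLinearMap ∘ₗ (LinearMap.proj b))) (Amap R v u)
      = sgn b.1 • castE α ((dtgt_rev b.1).trans b.2)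
          (phi R (rev Q b.1) (castE α (dsrc_rev b.1).symm
            (phi R b.1 (castE α b.2.symm u)))) := by
    intro b
    simp [Amap, LinearMap.pi_apply]
  rw [Finset.sum_congr rfl (fun b _ => step1 b)]
  rw [sum_subtype_dite (fun b : Q.DArrow => Q.dsrc b = v)
    (fun b hb => sgn b • castE α ((dtgt_rev b).trans hb)
      (phi R (rev Q b) (castE α (dsrc_rev b).symm (phi R b (castE α hb.symm u)))))]
  rw [Fintype.sum_sum_type]
  have e1 : ∀ a : Q.Arrow,
      (if h : Q.dsrc (Sum.inl a) = v then
        sgn (Sum.inl a) • castE α ((dtgt_rev (Sum.inl a)).trans h)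
          (phi R (rev Q (Sum.inl a)) (castE α (dsrc_rev (Sum.inl a)).symm
            (phi R (Sum.inl a) (castE α h.symm u)))) else 0)
      = -(if h : Q.src a = v then
          castE α h (phi R (Sum.inr a) (phi R (Sum.inl a) (castE α h.symm u))) else 0) := by
    intro a
    dsimp only [rev, sgn, Sum.elim_inl, Sum.elim_inr, FinQuiver.dsrc, FinQuiver.dtgt]
    by_cases h : Q.src a = v
    · rw [dif_pos h]; erw [dif_pos h]
      subst h
      rw [neg_smul, one_smul]
      simp
      rfl
    · rw [dif_neg h]; erw [dif_neg h]; rw [neg_zero]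
  have e2 : ∀ a : Q.Arrow,
      (if h : Q.dsrc (Sum.inr a) = v then
        sgn (Sum.inr a) • castE α ((dtgt_rev (Sum.inr a)).trans h)
          (phi R (rev Q (Sum.inr a)) (castE α (dsrc_rev (Sum.inr a)).symm
            (phi R (Sum.inr a) (castE α h.symm u)))) else 0)
      = (if h : Q.tgt a = v then
          castE α h (phi R (Sum.inl a) (phi R (Sum.inr a) (castE α h.symm u))) else 0) := by
    intro a
    dsimp only [rev, sgn, Sum.elim_inl, Sum.elim_inr, FinQuiver.dsrc, FinQuiver.dtgt]
    by_cases h : Q.tgt a = v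
    · rw [dif_pos h]; erw [dif_pos h]
      subst h
      rw [one_smul]
      simp
      rfl
    · rw [dif_neg h]; erw [dif_neg h]
  rw [Finset.sum_congr rfl (fun a _ => e1 a), Finset.sum_congr rfl (fun a _ => e2 a)]
  rw [Finset.sum_neg_distrib, rel_phi R v u]
  exact neg_add_cancel _

end Aux2
section Aux3

open Module LinearMap

variable {k : ℕ} {Q : FinQuiver k} {lam : Fin k → ℚ} {α : Fin k → ℕ}

lemma finrank_Wsp (Q : FinQuiver k) (α : Fin k → ℕ) (v : Fin k) :
    finrank ℂ (Wsp Q α v) = ∑ a : Q.Arrow,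
      ((if Q.src a = v then α (Q.tgt a) else 0) +
        (if Q.tgt a = v then α (Q.src a) else 0)) := by
  rw [Module.finrank_pi_fintype]
  have e0 : ∀ b : OutT Q v, finrank ℂ (Fin (α (Q.dtgt b.1)) → ℂ) = α (Q.dtgt b.1) :=
    fun b => Module.finrank_fin_fun ℂ
  rw [Finset.sum_congr rfl (fun b _ => e0 b)]
  rw [sum_subtype_dite (fun b : Q.DArrow => Q.dsrc b = v) (fun b _ => α (Q.dtgt b))]
  rw [Fintype.sum_sum_type]
  rw [Finset.sum_add_distrib]
  simp only [FinQuiver.dsrc, FinQuiver.dtgt, Sum.elim_inl, Sum.elim_inr, dite_eq_ite]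
  rfl

lemma X_apply_tgt (R : PiRep Q lam α) (b : Q.DArrow) (w : TotSpace α) :
    R.X b w (Q.dtgt b) = phi R b (w (Q.dsrc b)) := by
  rw [X_eq R b w]
  exact Pi.single_eq_same _ _

lemma inv_ker (R : PiRep Q lam α) (v : Fin k) :
    R.Invariant (fun i => if h : i = v then
      (ker (Amap R v)).comap (castE α h).toLinearMap else ⊥) := by
  intro b w hw
  dsimp only at hw ⊢
  by_cases hs : Q.dsrc b = v
  · rw [dif_pos hs] at hw
    have hA : Amap R v (castE α hs (w (Q.dsrc b))) = 0 := hw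
    have h0 : phi R b (w (Q.dsrc b)) = 0 := by
      have := congrFun hA ⟨b, hs⟩
      simpa [Amap, LinearMap.pi_apply, castE_symm_apply] using this
    rw [X_apply_tgt, h0]
    exact Submodule.zero_mem _
  · rw [dif_neg hs] at hw
    rw [Submodule.mem_bot] at hw
    rw [X_apply_tgt, hw, map_zero]
    exact Submodule.zero_mem _

lemma inv_range (R : PiRep Q lam α) (v : Fin k) :
    R.Invariant (fun i => if h : i = v then
      (range (Bmap R v)).comap (castE α h).toLinearMap else ⊤) := by
  intro b w _
  dsimp only
  by_cases ht : Q.dtgt b = v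
  · rw [dif_pos ht]
    rw [Submodule.mem_comap]
    rw [X_apply_tgt]
    cases b with
    | inl a =>
      have hout : Q.dsrc (Sum.inr a) = v := ht
      refine ⟨Pi.single (⟨Sum.inr a, hout⟩ : OutT Q v)
        (castE α (rfl : Q.src a = Q.dtgt (Sum.inr a)) (w (Q.dsrc (Sum.inl a)))), ?_⟩
      erw [Bmap_single]
      dsimp only [rev, sgn, Sum.elim_inl, Sum.elim_inr, FinQuiver.dsrc, FinQuiver.dtgt]
      rw [one_smul]
      simp [castE_trans]
      rfl
    | inr a =>
      have hout : Q.dsrc (Sum.inl a) = v := ht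
      refine ⟨Pi.single (⟨Sum.inl a, hout⟩ : OutT Q v)
        (-(castE α (rfl : Q.tgt a = Q.dtgt (Sum.inl a)) (w (Q.dsrc (Sum.inr a))))), ?_⟩
      erw [Bmap_single]
      dsimp only [rev, sgn, Sum.elim_inl, Sum.elim_inr, FinQuiver.dsrc, FinQuiver.dtgt]
      rw [neg_smul, one_smul]
      simp [castE_trans]
      have key : ∀ {i j : Fin k} (h : i = j) (x : Fin (α i) → ℂ),
          castE α h (-x) = -(castE α h x) := fun h x => map_neg _ x
      erw [key, LinearMap.map_neg, key, neg_neg]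
      rfl
  · rw [dif_neg ht]
    exact Submodule.mem_top

end Aux3
section Aux4

open Module LinearMap

lemma main_ineq {k : ℕ} (Q : FinQuiver k) (α : Fin k → ℕ) (v : Fin k)
    (hα : α ∈ SigmaSet Q (0 : Fin k → ℚ))
    (hne : (fun i => (α i : ℤ)) ≠ epsZ v) (hlf : Q.LoopFreeAt v) :
    2 * α v ≤ ∑ a : Q.Arrow,
      ((if Q.src a = v then α (Q.tgt a) else 0) +
        (if Q.tgt a = v then α (Q.src a) else 0)) := by
  obtain ⟨hα0, R, hR⟩ := hα
  by_cases hv : α v = 0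
  · rw [hv, Nat.mul_zero]; exact Nat.zero_le _
  have hone : (1 : Fin (α v) → ℂ) ≠ 0 := by
    intro h
    have := congrFun h ⟨0, Nat.pos_of_ne_zero hv⟩
    simp at this
  have hdeg : ¬ (∀ i, i ≠ v → α i = 0) := by
    intro hz
    apply hne
    have hα1 : α v = 1 := by
      set L : Submodule ℂ (Fin (α v) → ℂ) := ℂ ∙ (1 : Fin (α v) → ℂ) with hLdef
      have hinv : R.Invariant (fun i =>
          if h : i = v then L.comap (castE α h).toLinearMap else ⊥) := by
        intro b w hw
        dsimp only at hw ⊢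
        by_cases hs : Q.dsrc b = v
        · have ht : Q.dtgt b ≠ v := by
            intro ht
            cases b with
            | inl a => exact hlf a ⟨hs, ht⟩
            | inr a => exact hlf a ⟨ht, hs⟩
          rw [dif_neg ht]
          have hz' : α (Q.dtgt b) = 0 := hz _ ht
          have hx : R.X b w (Q.dtgt b) = 0 := funext fun idx => ((hz' ▸ idx : Fin 0)).elim0
          rw [hx]
          exact Submodule.zero_mem _
        · rw [dif_neg hs, Submodule.mem_bot] at hw
          rw [X_apply_tgt, hw, map_zero]
          exact Submodule.zero_mem _
      rcases hR _ hinv with hbot | htop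
      · exfalso
        have h1 := hbot v
        rw [dif_pos rfl, comap_castE_self] at h1
        have hm : (1 : Fin (α v) → ℂ) ∈ L := Submodule.mem_span_singleton_self _
        rw [h1, Submodule.mem_bot] at hm
        exact hone hm
      · have h1 := htop v
        rw [dif_pos rfl, comap_castE_self] at h1
        have h2 : finrank ℂ L = 1 := finrank_span_singleton hone
        rw [h1, finrank_top, Module.finrank_fin_fun] at h2
        exact h2
    funext i
    by_cases hi : i = v
    · subst hi; simp [epsZ, hα1]
    · simp [epsZ, hi, hz i hi]
  by_cases hker : ker (Amap R v) = ⊥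
  · by_cases hrng : range (Bmap R v) = ⊤
    · have hW := finrank_Wsp Q α v
      have h1 : finrank ℂ (range (Amap R v)) + finrank ℂ (ker (Amap R v)) = α v := by
        rw [LinearMap.finrank_range_add_finrank_ker]
        exact Module.finrank_fin_fun ℂ
      rw [hker, finrank_bot, add_zero] at h1
      have h2 : range (Amap R v) ≤ ker (Bmap R v) := by
        rintro x ⟨u, rfl⟩
        exact LinearMap.mem_ker.2 (BA_zero R v u)
      have h3 := Submodule.finrank_mono h2
      have h4 : finrank ℂ (range (Bmap R v)) + finrank ℂ (ker (Bmap R v))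
          = finrank ℂ (Wsp Q α v) := LinearMap.finrank_range_add_finrank_ker _
      have h5 : finrank ℂ (range (Bmap R v)) = α v := by
        rw [hrng, finrank_top]
        exact Module.finrank_fin_fun ℂ
      omega
    · rcases hR _ (inv_range R v) with hbot | htop
      · exfalso
        apply hdeg
        intro i hi
        have h1 := hbot i
        rw [dif_neg hi] at h1
        exact bot_eq_top_imp h1.symm
      · exfalso
        apply hrng
        have h1 := htop v
        rw [dif_pos rfl, comap_castE_self] at h1
        exact h1
  · rcases hR _ (inv_ker R v) with hbot | htop
    · exfalso
      apply hker
      have h1 := hbot v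
      rw [dif_pos rfl, comap_castE_self] at h1
      exact h1
    · exfalso
      apply hdeg
      intro i hi
      have h1 := htop i
      rw [dif_neg hi] at h1
      exact bot_eq_top_imp h1

end Aux4
/-- If `α ∈ Σ_0` and `v` is a vertex with `α ≠ ε_v`, then
`χ(α,ε_v) + χ(ε_v,α) ≤ 0`; in particular if there are no loops at `v` then `2 α_v`
is at most the sum, over the arrows of `Q` incident to `v`, of the coordinate of `α`
at the other endpoint. -/
theorem statement4 {k : ℕ} (Q : FinQuiver k) (α : Fin k → ℕ) (v : Fin k)
    (hα : α ∈ SigmaSet Q (0 : Fin k → ℚ))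
    (hne : (fun i => (α i : ℤ)) ≠ epsZ v) :
    eulerZ Q (fun i => (α i : ℤ)) (epsZ v) + eulerZ Q (epsZ v) (fun i => (α i : ℤ)) ≤ 0 ∧
    (Q.LoopFreeAt v →
      2 * α v ≤ ∑ a : Q.Arrow,
        ((if Q.src a = v then α (Q.tgt a) else 0) +
          (if Q.tgt a = v then α (Q.src a) else 0))) := by
  have hmain : Q.LoopFreeAt v → 2 * α v ≤ ∑ a : Q.Arrow,
      ((if Q.src a = v then α (Q.tgt a) else 0) +
        (if Q.tgt a = v then α (Q.src a) else 0)) :=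
    fun hlf => main_ineq Q α v hα hne hlf
  refine ⟨?_, hmain⟩
  have e1 : eulerZ Q (fun i => (α i : ℤ)) (epsZ v)
      = (α v : ℤ) - ∑ a : Q.Arrow, (if Q.tgt a = v then (α (Q.src a) : ℤ) else 0) := by
    rw [eulerZ]
    congr 1
    · simp [epsZ, mul_ite]
    · apply Finset.sum_congr rfl
      intro a _
      simp [epsZ, mul_ite]
  have e2 : eulerZ Q (epsZ v) (fun i => (α i : ℤ))
      = (α v : ℤ) - ∑ a : Q.Arrow, (if Q.src a = v then (α (Q.tgt a) : ℤ) else 0) := by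
    rw [eulerZ]
    congr 1
    · simp [epsZ, ite_mul]
    · apply Finset.sum_congr rfl
      intro a _
      simp [epsZ, ite_mul]
  rw [e1, e2]
  by_cases hlf : Q.LoopFreeAt v
  · have h := hmain hlf
    have hcast : ((∑ a : Q.Arrow,
        ((if Q.src a = v then α (Q.tgt a) else 0) +
          (if Q.tgt a = v then α (Q.src a) else 0)) : ℕ) : ℤ)
        = (∑ a : Q.Arrow, (if Q.src a = v then (α (Q.tgt a) : ℤ) else 0))
          + ∑ a : Q.Arrow, (if Q.tgt a = v then (α (Q.src a) : ℤ) else 0) := by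
      rw [← Finset.sum_add_distrib]
      push_cast
      apply Finset.sum_congr rfl
      intro a _
      split_ifs <;> simp
    have h' : ((2 * α v : ℕ) : ℤ) ≤ ((∑ a : Q.Arrow,
        ((if Q.src a = v then α (Q.tgt a) else 0) +
          (if Q.tgt a = v then α (Q.src a) else 0)) : ℕ) : ℤ) := Nat.cast_le.mpr h
    rw [hcast] at h'
    push_cast at h'
    linarith
  · rw [FinQuiver.LoopFreeAt] at hlf
    push_neg at hlf
    obtain ⟨a0, h1, h2⟩ := hlf
    have key1 : (α v : ℤ) ≤ ∑ a : Q.Arrow, (if Q.tgt a = v then (α (Q.src a) : ℤ) else 0) := by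
      have := Finset.single_le_sum
        (f := fun a => if Q.tgt a = v then (α (Q.src a) : ℤ) else 0)
        (fun a _ => by split_ifs; exacts [Int.natCast_nonneg _, le_rfl])
        (Finset.mem_univ a0)
      rwa [if_pos h2, h1] at this
    have key2 : (α v : ℤ) ≤ ∑ a : Q.Arrow, (if Q.src a = v then (α (Q.tgt a) : ℤ) else 0) := by
      have := Finset.single_le_sum
        (f := fun a => if Q.src a = v then (α (Q.tgt a) : ℤ) else 0)
        (fun a _ => by split_ifs; exacts [Int.natCast_nonneg _, le_rfl])
        (Finset.mem_univ a0)
      rwa [if_pos h1, h2] at this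
    linarith
end

section
/- Let V and W be non-isomorphic simple representations of the deformed preprojective algebra Π_λ of the quiver Q, with dimension vectors β and γ respectively. Then χ(β,γ) + χ(γ,β) ≤ 0. -/
open LinearMap Module

namespace Aux5

noncomputable section

variable {k : ℕ} {Q : FinQuiver k} {lam : Fin k → ℚ}

/-- Component space at vertex `i`. -/
abbrev Cmp (α : Fin k → ℕ) (i : Fin k) : Type := Fin (α i) → ℂ

/-- Insertion of the `i`-th component. -/
abbrev sing (α : Fin k → ℕ) (i : Fin k) : Cmp α i →ₗ[ℂ] TotSpace α :=
  LinearMap.single ℂ (fun j => Fin (α j) → ℂ) i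

/-- Projection onto the `i`-th component. -/
abbrev prj (α : Fin k → ℕ) (i : Fin k) : TotSpace α →ₗ[ℂ] Cmp α i :=
  LinearMap.proj i

variable {α β γ : Fin k → ℕ}

/-- The component linear map of a representation along an arrow. -/
def Xc (R : PiRep Q lam α) (b : Q.DArrow) :
    Cmp α (Q.dsrc b) →ₗ[ℂ] Cmp α (Q.dtgt b) :=
  prj α (Q.dtgt b) ∘ₗ R.X b ∘ₗ sing α (Q.dsrc b)

lemma X_apply_tgt (R : PiRep Q lam α) (b : Q.DArrow) (v : TotSpace α) :
    R.X b v (Q.dtgt b) = Xc R b (v (Q.dsrc b)) := by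
  have h : R.X b (Pi.single (Q.dsrc b) (v (Q.dsrc b))) = R.X b v :=
    R.X_src b _ v (by simp)
  simp [Xc, h]

lemma prj_comp_sing (i : Fin k) : prj α i ∘ₗ sing α i = LinearMap.id := by
  ext x; simp

/-- The total-space linear map associated to a family of component maps. -/
def totHom (θ : ∀ i, Cmp β i →ₗ[ℂ] Cmp γ i) : TotSpace β →ₗ[ℂ] TotSpace γ where
  toFun v := fun i => θ i (v i)
  map_add' u v := by funext i; simp
  map_smul' c v := by funext i; simp

@[simp] lemma totHom_apply (θ : ∀ i, Cmp β i →ₗ[ℂ] Cmp γ i) (v : TotSpace β) (i : Fin k) :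
    totHom θ v i = θ i (v i) := rfl

lemma totHom_eq_sum (θ : ∀ i, Cmp β i →ₗ[ℂ] Cmp γ i) :
    totHom θ = ∑ i, sing γ i ∘ₗ θ i ∘ₗ prj β i := by
  refine LinearMap.ext fun v => funext fun j => ?_
  rw [LinearMap.sum_apply]
  simp only [comp_apply, coe_single, proj_apply, Finset.sum_apply]
  rw [Fintype.sum_pi_single (f := fun i => θ i (v i))]
  rfl

/-- The space of families of component maps (`Hom` between vertex spaces). -/
abbrev HomSp (β γ : Fin k → ℕ) : Type := ∀ i : Fin k, Cmp β i →ₗ[ℂ] Cmp γ i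

/-- The space indexed by arrows of the double quiver. -/
abbrev ESp (Q : FinQuiver k) (β γ : Fin k → ℕ) : Type :=
  ∀ b : Q.DArrow, Cmp β (Q.dsrc b) →ₗ[ℂ] Cmp γ (Q.dtgt b)

/-- Inflation of a component map along an arrow to the total space. -/
def toTot (b : Q.DArrow) (f : Cmp β (Q.dsrc b) →ₗ[ℂ] Cmp γ (Q.dtgt b)) :
    TotSpace β →ₗ[ℂ] TotSpace γ :=
  sing γ (Q.dtgt b) ∘ₗ f ∘ₗ prj β (Q.dsrc b)

lemma toTot_add (b : Q.DArrow) (f g : Cmp β (Q.dsrc b) →ₗ[ℂ] Cmp γ (Q.dtgt b)) :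
    toTot b (f + g) = toTot b f + toTot b g := by
  simp [toTot, comp_add, add_comp]

lemma toTot_smul (b : Q.DArrow) (c : ℂ) (f : Cmp β (Q.dsrc b) →ₗ[ℂ] Cmp γ (Q.dtgt b)) :
    toTot b (c • f) = c • toTot b f := by
  simp [toTot, comp_smul, smul_comp]

@[simp] lemma toTot_apply (b : Q.DArrow) (f : Cmp β (Q.dsrc b) →ₗ[ℂ] Cmp γ (Q.dtgt b))
    (v : TotSpace β) : toTot b f v = Pi.single (Q.dtgt b) (f (v (Q.dsrc b))) := rfl

/-- The map `c`. -/
def cMap (V : PiRep Q lam β) (W : PiRep Q lam γ) : HomSp β γ →ₗ[ℂ] ESp Q β γ where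
  toFun θ := fun b => θ (Q.dtgt b) ∘ₗ Xc V b - Xc W b ∘ₗ θ (Q.dsrc b)
  map_add' θ θ' := by
    funext b
    simp only [Pi.add_apply, add_comp, comp_add]
    abel
  map_smul' c θ := by
    funext b
    simp only [Pi.smul_apply, smul_comp, comp_smul, RingHom.id_apply, smul_sub]

@[simp] lemma cMap_apply (V : PiRep Q lam β) (W : PiRep Q lam γ) (θ : HomSp β γ)
    (b : Q.DArrow) :
    cMap V W θ b = θ (Q.dtgt b) ∘ₗ Xc V b - Xc W b ∘ₗ θ (Q.dsrc b) := rfl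

end

end Aux5
namespace Aux5

noncomputable section

variable {k : ℕ} {Q : FinQuiver k} {lam : Fin k → ℚ} {β γ : Fin k → ℕ}

/-- The total-space operator underlying the map `d`. -/
def dTot (V : PiRep Q lam β) (W : PiRep Q lam γ) (φ : ESp Q β γ) :
    TotSpace β →ₗ[ℂ] TotSpace γ :=
  ∑ a : Q.Arrow,
    (W.X (Sum.inr a) ∘ₗ toTot (Sum.inl a) (φ (Sum.inl a))
      - toTot (Sum.inl a) (φ (Sum.inl a)) ∘ₗ V.X (Sum.inr a)
      - W.X (Sum.inl a) ∘ₗ toTot (Sum.inr a) (φ (Sum.inr a))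
      + toTot (Sum.inr a) (φ (Sum.inr a)) ∘ₗ V.X (Sum.inl a))

lemma dTot_add (V : PiRep Q lam β) (W : PiRep Q lam γ) (φ ψ : ESp Q β γ) :
    dTot V W (φ + ψ) = dTot V W φ + dTot V W ψ := by
  unfold dTot
  rw [← Finset.sum_add_distrib]
  refine Finset.sum_congr rfl fun a _ => ?_
  simp only [Pi.add_apply, toTot_add, comp_add, add_comp]
  abel

lemma dTot_smul (V : PiRep Q lam β) (W : PiRep Q lam γ) (c : ℂ) (φ : ESp Q β γ) :
    dTot V W (c • φ) = c • dTot V W φ := by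
  unfold dTot
  rw [Finset.smul_sum]
  refine Finset.sum_congr rfl fun a _ => ?_
  simp only [Pi.smul_apply, toTot_smul, comp_smul, smul_comp, smul_sub, smul_add]

/-- The map `d`. -/
def dMap (V : PiRep Q lam β) (W : PiRep Q lam γ) : ESp Q β γ →ₗ[ℂ] HomSp β γ where
  toFun φ := fun i => prj γ i ∘ₗ dTot V W φ ∘ₗ sing β i
  map_add' φ ψ := by
    funext i
    simp only [dTot_add, add_comp, comp_add, Pi.add_apply]
  map_smul' c φ := by
    funext i
    simp only [dTot_smul, smul_comp, comp_smul, RingHom.id_apply, Pi.smul_apply]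

@[simp] lemma dMap_apply (V : PiRep Q lam β) (W : PiRep Q lam γ) (φ : ESp Q β γ) (i : Fin k) :
    dMap V W φ i = prj γ i ∘ₗ dTot V W φ ∘ₗ sing β i := rfl

/-- Inflation of a component of `c θ` is a commutator at the total-space level. -/
lemma toTot_cMap (V : PiRep Q lam β) (W : PiRep Q lam γ) (θ : HomSp β γ) (b : Q.DArrow) :
    toTot b (cMap V W θ b) = totHom θ ∘ₗ V.X b - W.X b ∘ₗ totHom θ := by
  refine LinearMap.ext fun v => funext fun j => ?_
  by_cases h : j = Q.dtgt b
  · subst h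
    simp only [toTot_apply, cMap_apply, LinearMap.sub_apply, comp_apply, totHom_apply,
      Pi.single_eq_same, Pi.sub_apply]
    rw [X_apply_tgt V b v, X_apply_tgt W b (totHom θ v)]
    rfl
  · simp only [toTot_apply, LinearMap.sub_apply, comp_apply, totHom_apply, Pi.sub_apply,
      Pi.single_eq_of_ne h]
    rw [V.X_tgt b v j h, W.X_tgt b (totHom θ v) j h]
    simp

lemma dTot_cMap (V : PiRep Q lam β) (W : PiRep Q lam γ) (θ : HomSp β γ) :
    dTot V W (cMap V W θ) = 0 := by
  refine LinearMap.ext fun v => funext fun i => ?_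
  unfold dTot
  rw [LinearMap.sum_apply]
  simp only [LinearMap.zero_apply, Pi.zero_apply, Finset.sum_apply]
  have step : ∀ a : Q.Arrow,
      ((W.X (Sum.inr a) ∘ₗ toTot (Sum.inl a) (cMap V W θ (Sum.inl a))
      - toTot (Sum.inl a) (cMap V W θ (Sum.inl a)) ∘ₗ V.X (Sum.inr a)
      - W.X (Sum.inl a) ∘ₗ toTot (Sum.inr a) (cMap V W θ (Sum.inr a))
      + toTot (Sum.inr a) (cMap V W θ (Sum.inr a)) ∘ₗ V.X (Sum.inl a)) v) i
      = (W.X (Sum.inl a) (W.X (Sum.inr a) (totHom θ v)) i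
          - W.X (Sum.inr a) (W.X (Sum.inl a) (totHom θ v)) i)
        + (θ i ((V.X (Sum.inr a) (V.X (Sum.inl a) v)) i)
          - θ i ((V.X (Sum.inl a) (V.X (Sum.inr a) v)) i)) := by
    intro a
    simp only [toTot_cMap, LinearMap.add_apply, LinearMap.sub_apply, comp_apply, map_sub, totHom_apply,
      Pi.add_apply, Pi.sub_apply]
    abel
  rw [Finset.sum_congr rfl fun a _ => step a]
  rw [Finset.sum_add_distrib, Finset.sum_sub_distrib, Finset.sum_sub_distrib]
  rw [W.relation (totHom θ v) i]
  rw [← map_sum, ← map_sum, ← map_sub]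
  have : (∑ a : Q.Arrow, V.X (Sum.inr a) (V.X (Sum.inl a) v) i)
      - ∑ a : Q.Arrow, V.X (Sum.inl a) (V.X (Sum.inr a) v) i
      = -(((lam i : ℚ) : ℂ) • v i) := by
    rw [← neg_sub, V.relation v i]
  rw [this]
  simp

end

end Aux5
namespace Aux5

noncomputable section

variable {k : ℕ} {Q : FinQuiver k} {lam : Fin k → ℚ} {β γ : Fin k → ℕ}

lemma repIso_symm {V : PiRep Q lam β} {W : PiRep Q lam γ} (h : RepIso V W) : RepIso W V := by
  obtain ⟨g, hg⟩ := h
  refine ⟨fun i => (g i).symm, fun b v i => ?_⟩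
  have hv : (fun j => g j ((g j).symm (v j))) = v :=
    funext fun j => (g j).apply_symm_apply _
  have := hg b (fun j => (g j).symm (v j)) i
  rw [hv] at this
  rw [this, LinearEquiv.symm_apply_apply]

lemma cMap_injective (V : PiRep Q lam β) (W : PiRep Q lam γ)
    (hV : V.IsSimple) (hW : W.IsSimple) (hniso : ¬ RepIso V W) :
    Function.Injective (cMap V W) := by
  rw [← LinearMap.ker_eq_bot, LinearMap.ker_eq_bot']
  intro θ hθ
  have hpt : ∀ (b : Q.DArrow) (x : Cmp β (Q.dsrc b)),
      θ (Q.dtgt b) (Xc V b x) = Xc W b (θ (Q.dsrc b) x) := by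
    intro b x
    have h0 := congrFun hθ b
    simp only [cMap_apply, Pi.zero_apply] at h0
    rw [sub_eq_zero] at h0
    exact DFunLike.congr_fun h0 x
  have hker : V.Invariant fun i => LinearMap.ker (θ i) := by
    intro b v hv
    rw [LinearMap.mem_ker] at hv ⊢
    rw [X_apply_tgt V b v, hpt b, hv, map_zero]
  have hrange : W.Invariant fun i => LinearMap.range (θ i) := by
    intro b v hv
    obtain ⟨x, hx⟩ := hv
    exact ⟨Xc V b x, by rw [hpt b, hx, ← X_apply_tgt W b v]⟩
  rcases hV _ hker with hbot | htop
  · rcases hW _ hrange with h0 | h1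
    · funext i
      exact LinearMap.range_eq_bot.mp (h0 i)
    · exfalso
      apply hniso
      refine ⟨fun i => LinearEquiv.ofBijective (θ i)
        ⟨LinearMap.ker_eq_bot.mp (hbot i), LinearMap.range_eq_top.mp (h1 i)⟩, ?_⟩
      intro b v i
      by_cases h : i = Q.dtgt b
      · subst h
        show W.X b (fun j => θ j (v j)) (Q.dtgt b) = θ (Q.dtgt b) (V.X b v (Q.dtgt b))
        rw [X_apply_tgt W b, X_apply_tgt V b, ← hpt b]
      · show W.X b (fun j => θ j (v j)) i = θ i (V.X b v i)
        rw [W.X_tgt b _ i h, V.X_tgt b v i h, map_zero]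
  · funext i
    exact LinearMap.ker_eq_top.mp (htop i)

end

end Aux5
namespace Aux5

noncomputable section

open LinearMap Module

/-- Nondegeneracy of the trace pairing on spaces of linear maps. -/
lemma comp_trace_zero {m n : ℕ} (g : (Fin m → ℂ) →ₗ[ℂ] (Fin n → ℂ))
    (h : ∀ f : (Fin n → ℂ) →ₗ[ℂ] (Fin m → ℂ), trace ℂ (Fin n → ℂ) (g ∘ₗ f) = 0) :
    g = 0 := by
  apply LinearMap.toMatrix'.injective
  ext i j
  have := h (Matrix.toLin' (Matrix.single j i 1))
  rw [trace_eq_matrix_trace ℂ (Pi.basisFun ℂ (Fin n)),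
    LinearMap.toMatrix_eq_toMatrix', LinearMap.toMatrix'_comp,
    LinearMap.toMatrix'_toLin'] at this
  simp only [Matrix.trace, Matrix.diag_apply, Matrix.mul_apply, Matrix.single,
    Matrix.of_apply, mul_ite, mul_one, mul_zero, ite_and, Finset.sum_ite_eq,
    Finset.sum_ite_eq', Finset.mem_univ, if_true] at this
  simpa using this

variable {k : ℕ} {Q : FinQuiver k} {lam : Fin k → ℚ} {β γ : Fin k → ℕ}

lemma trace_diag (i : Fin k) (m : Cmp β i →ₗ[ℂ] Cmp β i) :
    trace ℂ (TotSpace β) (sing β i ∘ₗ m ∘ₗ prj β i) = trace ℂ (Cmp β i) m := by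
  rw [show sing β i ∘ₗ m ∘ₗ prj β i = sing β i ∘ₗ (m ∘ₗ prj β i) from rfl,
    trace_comp_comm' (m ∘ₗ prj β i) (sing β i), comp_assoc, prj_comp_sing, comp_id]

/-- The trace pairing on `HomSp`. -/
def pA (β γ : Fin k → ℕ) : HomSp γ β →ₗ[ℂ] Module.Dual ℂ (HomSp β γ) :=
  LinearMap.mk₂ ℂ (fun θ' θ => ∑ i, trace ℂ (Cmp β i) (θ' i ∘ₗ θ i))
    (fun θ' θ'' θ => by simp only [Pi.add_apply, Pi.smul_apply, add_comp, comp_add, smul_comp, comp_smul, map_add, map_smul, smul_eq_mul, smul_sub, Finset.sum_add_distrib, Finset.mul_sum, mul_sub, add_sub_add_comm])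
    (fun c θ' θ => by simp only [Pi.add_apply, Pi.smul_apply, add_comp, comp_add, smul_comp, comp_smul, map_add, map_smul, smul_eq_mul, smul_sub, Finset.sum_add_distrib, Finset.mul_sum, mul_sub, add_sub_add_comm])
    (fun θ' θ θ'' => by simp only [Pi.add_apply, Pi.smul_apply, add_comp, comp_add, smul_comp, comp_smul, map_add, map_smul, smul_eq_mul, smul_sub, Finset.sum_add_distrib, Finset.mul_sum, mul_sub, add_sub_add_comm])
    (fun c θ' θ => by simp only [Pi.add_apply, Pi.smul_apply, add_comp, comp_add, smul_comp, comp_smul, map_add, map_smul, smul_eq_mul, smul_sub, Finset.sum_add_distrib, Finset.mul_sum, mul_sub, add_sub_add_comm])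

@[simp] lemma pA_apply (θ' : HomSp γ β) (θ : HomSp β γ) :
    pA β γ θ' θ = ∑ i, trace ℂ (Cmp β i) (θ' i ∘ₗ θ i) := rfl

/-- The trace pairing on `ESp`. -/
def pB : ESp Q γ β →ₗ[ℂ] Module.Dual ℂ (ESp Q β γ) :=
  LinearMap.mk₂ ℂ (fun φ' φ => ∑ a : Q.Arrow,
      (trace ℂ _ (φ' (Sum.inr a) ∘ₗ φ (Sum.inl a))
        - trace ℂ _ (φ' (Sum.inl a) ∘ₗ φ (Sum.inr a))))
    (fun x y z => by
      rw [← Finset.sum_add_distrib]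
      refine Finset.sum_congr rfl fun a _ => ?_
      erw [add_comp, add_comp, map_add, map_add]; ring)
    (fun c x y => by
      rw [smul_eq_mul, Finset.mul_sum]
      refine Finset.sum_congr rfl fun a _ => ?_
      have e : ∀ {n p : ℕ} (f : (Fin n → ℂ) →ₗ[ℂ] (Fin p → ℂ)) (g : (Fin p → ℂ) →ₗ[ℂ] (Fin n → ℂ)),
          trace ℂ (Fin p → ℂ) ((c • f) ∘ₗ g) = c * trace ℂ (Fin p → ℂ) (f ∘ₗ g) := by
        intros; rw [LinearMap.smul_comp, map_smul, smul_eq_mul]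
      erw [e, e]; ring)
    (fun x y z => by
      rw [← Finset.sum_add_distrib]
      refine Finset.sum_congr rfl fun a _ => ?_
      erw [comp_add, comp_add, map_add, map_add]; ring)
    (fun c x y => by
      rw [smul_eq_mul, Finset.mul_sum]
      refine Finset.sum_congr rfl fun a _ => ?_
      have e : ∀ {n p : ℕ} (f : (Fin n → ℂ) →ₗ[ℂ] (Fin p → ℂ)) (g : (Fin p → ℂ) →ₗ[ℂ] (Fin n → ℂ)),
          trace ℂ (Fin p → ℂ) (f ∘ₗ (c • g)) = c * trace ℂ (Fin p → ℂ) (f ∘ₗ g) := by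
        intros; rw [LinearMap.comp_smul, map_smul, smul_eq_mul]
      erw [e, e]; ring)

@[simp] lemma pB_apply (φ' : ESp Q γ β) (φ : ESp Q β γ) :
    pB φ' φ = ∑ a : Q.Arrow,
      (trace ℂ _ (φ' (Sum.inr a) ∘ₗ φ (Sum.inl a))
        - trace ℂ _ (φ' (Sum.inl a) ∘ₗ φ (Sum.inr a))) := rfl

lemma pA_injective : Function.Injective (pA β γ) := by
  rw [← LinearMap.ker_eq_bot, LinearMap.ker_eq_bot']
  intro θ' hθ'
  funext i
  refine comp_trace_zero (θ' i) fun f => ?_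
  classical
  have := DFunLike.congr_fun hθ' (Pi.single i f)
  rw [pA_apply] at this
  rw [Finset.sum_eq_single i] at this
  · rwa [Pi.single_eq_same] at this
  · intro j _ hj
    rw [Pi.single_eq_of_ne hj, comp_zero, map_zero]
  · intro hmem
    exact absurd (Finset.mem_univ i) hmem

lemma pB_eq_zero {φ' : ESp Q γ β} (h : ∀ φ : ESp Q β γ, pB φ' φ = 0) : φ' = 0 := by
  classical
  funext b
  cases b with
  | inl a =>
    refine comp_trace_zero (φ' (Sum.inl a)) fun f => ?_
    have := h (Pi.single (Sum.inr a) f)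
    rw [pB_apply, Finset.sum_eq_single a] at this
    · erw [Pi.single_eq_of_ne (by simp), Pi.single_eq_same, comp_zero, map_zero,
        zero_sub, neg_eq_zero] at this
      exact this
    · intro a' _ ha'
      erw [Pi.single_eq_of_ne (by simp), Pi.single_eq_of_ne (by simp [ha']),
        comp_zero, comp_zero, map_zero, map_zero, sub_zero]
    · intro hmem
      exact absurd (Finset.mem_univ a) hmem
  | inr a =>
    refine comp_trace_zero (φ' (Sum.inr a)) fun f => ?_
    have := h (Pi.single (Sum.inl a) f)
    rw [pB_apply, Finset.sum_eq_single a] at this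
    · erw [Pi.single_eq_same, Pi.single_eq_of_ne (by simp), comp_zero, map_zero,
        sub_zero] at this
      exact this
    · intro a' _ ha'
      erw [Pi.single_eq_of_ne (by simp [ha']), Pi.single_eq_of_ne (by simp),
        comp_zero, comp_zero, map_zero, map_zero, sub_zero]
    · intro hmem
      exact absurd (Finset.mem_univ a) hmem

lemma pA_surjective : Function.Surjective (pA β γ) := by
  have h1 : Module.finrank ℂ (HomSp γ β) = Module.finrank ℂ (Module.Dual ℂ (HomSp β γ)) := by
    rw [Subspace.dual_finrank_eq, Module.finrank_pi_fintype, Module.finrank_pi_fintype]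
    refine Finset.sum_congr rfl fun i _ => ?_
    rw [Module.finrank_linearMap, Module.finrank_linearMap,
      Module.finrank_fin_fun, Module.finrank_fin_fun, mul_comm]
  exact (LinearMap.injective_iff_surjective_of_finrank_eq_finrank h1).mp pA_injective

end

end Aux5
namespace Aux5

noncomputable section

open LinearMap Module

section comps
variable {M N P : Type*} [AddCommGroup M] [AddCommGroup N] [AddCommGroup P]
  [Module ℂ M] [Module ℂ N] [Module ℂ P]

lemma sumL_comp {ι : Type*} (s : Finset ι) (f : ι → (M →ₗ[ℂ] N)) (g : P →ₗ[ℂ] M) :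
    (∑ i ∈ s, f i) ∘ₗ g = ∑ i ∈ s, f i ∘ₗ g := by
  refine LinearMap.ext fun v => ?_
  simp [LinearMap.sum_apply]

lemma comp_sumL {ι : Type*} (s : Finset ι) (f : ι → (M →ₗ[ℂ] N)) (g : N →ₗ[ℂ] P) :
    g ∘ₗ (∑ i ∈ s, f i) = ∑ i ∈ s, g ∘ₗ f i := by
  refine LinearMap.ext fun v => ?_
  simp [LinearMap.sum_apply]

end comps

lemma trace_rot3 {n1 n2 n3 : ℕ} (f : (Fin n1 → ℂ) →ₗ[ℂ] (Fin n2 → ℂ))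
    (g : (Fin n2 → ℂ) →ₗ[ℂ] (Fin n3 → ℂ)) (h : (Fin n3 → ℂ) →ₗ[ℂ] (Fin n1 → ℂ)) :
    trace ℂ (Fin n1 → ℂ) (h ∘ₗ g ∘ₗ f) = trace ℂ (Fin n2 → ℂ) ((f ∘ₗ h) ∘ₗ g) := by
  rw [trace_comp_comm' (g ∘ₗ f) h, comp_assoc, trace_comp_comm' (f ∘ₗ h) g]

variable {k : ℕ} {Q : FinQuiver k} {lam : Fin k → ℚ} {β γ : Fin k → ℕ}

lemma X_tgt_inl (R : PiRep Q lam β) (a : Q.Arrow) (v : TotSpace β) :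
    R.X (Sum.inl a) v (Q.tgt a) = Xc R (Sum.inl a) (v (Q.src a)) :=
  X_apply_tgt R (Sum.inl a) v

lemma X_tgt_inr (R : PiRep Q lam β) (a : Q.Arrow) (v : TotSpace β) :
    R.X (Sum.inr a) v (Q.src a) = Xc R (Sum.inr a) (v (Q.tgt a)) :=
  X_apply_tgt R (Sum.inr a) v

lemma toTot_inl_apply (a : Q.Arrow) (f : Cmp β (Q.src a) →ₗ[ℂ] Cmp γ (Q.tgt a))
    (v : TotSpace β) : toTot (Sum.inl a) f v = Pi.single (Q.tgt a) (f (v (Q.src a))) := rfl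

lemma toTot_inr_apply (a : Q.Arrow) (g : Cmp β (Q.tgt a) →ₗ[ℂ] Cmp γ (Q.src a))
    (v : TotSpace β) : toTot (Sum.inr a) g v = Pi.single (Q.src a) (g (v (Q.tgt a))) := rfl

lemma keyI1 (W : PiRep Q lam γ) (θ' : HomSp γ β) (a : Q.Arrow)
    (f : Cmp β (Q.src a) →ₗ[ℂ] Cmp γ (Q.tgt a)) :
    totHom θ' ∘ₗ W.X (Sum.inr a) ∘ₗ toTot (Sum.inl a) f
      = sing β (Q.src a) ∘ₗ (θ' (Q.src a) ∘ₗ Xc W (Sum.inr a) ∘ₗ f) ∘ₗ prj β (Q.src a) := by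
  refine LinearMap.ext fun v => funext fun j => ?_
  simp only [comp_apply, totHom_apply, coe_single, proj_apply]
  by_cases h : j = Q.src a
  · subst h
    rw [Pi.single_eq_same, X_tgt_inr, toTot_inl_apply, Pi.single_eq_same]
    rfl
  · rw [Pi.single_eq_of_ne h, W.X_tgt (Sum.inr a) _ j h, map_zero]

lemma keyI2 (V : PiRep Q lam β) (θ' : HomSp γ β) (a : Q.Arrow)
    (f : Cmp β (Q.src a) →ₗ[ℂ] Cmp γ (Q.tgt a)) :
    totHom θ' ∘ₗ toTot (Sum.inl a) f ∘ₗ V.X (Sum.inr a)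
      = sing β (Q.tgt a) ∘ₗ (θ' (Q.tgt a) ∘ₗ f ∘ₗ Xc V (Sum.inr a)) ∘ₗ prj β (Q.tgt a) := by
  refine LinearMap.ext fun v => funext fun j => ?_
  simp only [comp_apply, totHom_apply, coe_single, proj_apply, toTot_inl_apply]
  by_cases h : j = Q.tgt a
  · subst h
    rw [Pi.single_eq_same, Pi.single_eq_same, X_tgt_inr]
    rfl
  · rw [Pi.single_eq_of_ne h, Pi.single_eq_of_ne h, map_zero]

lemma keyI3 (W : PiRep Q lam γ) (θ' : HomSp γ β) (a : Q.Arrow)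
    (g : Cmp β (Q.tgt a) →ₗ[ℂ] Cmp γ (Q.src a)) :
    totHom θ' ∘ₗ W.X (Sum.inl a) ∘ₗ toTot (Sum.inr a) g
      = sing β (Q.tgt a) ∘ₗ (θ' (Q.tgt a) ∘ₗ Xc W (Sum.inl a) ∘ₗ g) ∘ₗ prj β (Q.tgt a) := by
  refine LinearMap.ext fun v => funext fun j => ?_
  simp only [comp_apply, totHom_apply, coe_single, proj_apply]
  by_cases h : j = Q.tgt a
  · subst h
    rw [Pi.single_eq_same, X_tgt_inl, toTot_inr_apply, Pi.single_eq_same]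
    rfl
  · rw [Pi.single_eq_of_ne h, W.X_tgt (Sum.inl a) _ j h, map_zero]

lemma keyI4 (V : PiRep Q lam β) (θ' : HomSp γ β) (a : Q.Arrow)
    (g : Cmp β (Q.tgt a) →ₗ[ℂ] Cmp γ (Q.src a)) :
    totHom θ' ∘ₗ toTot (Sum.inr a) g ∘ₗ V.X (Sum.inl a)
      = sing β (Q.src a) ∘ₗ (θ' (Q.src a) ∘ₗ g ∘ₗ Xc V (Sum.inl a)) ∘ₗ prj β (Q.src a) := by
  refine LinearMap.ext fun v => funext fun j => ?_
  simp only [comp_apply, totHom_apply, coe_single, proj_apply, toTot_inr_apply]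
  by_cases h : j = Q.src a
  · subst h
    rw [Pi.single_eq_same, Pi.single_eq_same, X_tgt_inl]
    rfl
  · rw [Pi.single_eq_of_ne h, Pi.single_eq_of_ne h, map_zero]

end

end Aux5
namespace Aux5

noncomputable section

open LinearMap Module

variable {k : ℕ} {Q : FinQuiver k} {lam : Fin k → ℚ} {β γ : Fin k → ℕ}

lemma dsrc_inl' (a : Q.Arrow) : Q.dsrc (Sum.inl a) = Q.src a := rfl
lemma dsrc_inr' (a : Q.Arrow) : Q.dsrc (Sum.inr a) = Q.tgt a := rfl
lemma dtgt_inl' (a : Q.Arrow) : Q.dtgt (Sum.inl a) = Q.tgt a := rfl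
lemma dtgt_inr' (a : Q.Arrow) : Q.dtgt (Sum.inr a) = Q.src a := rfl

lemma pA_dMap (V : PiRep Q lam β) (W : PiRep Q lam γ) (θ' : HomSp γ β) (φ : ESp Q β γ) :
    pA β γ θ' (dMap V W φ) = pB (cMap W V θ') φ := by
  have hL : pA β γ θ' (dMap V W φ)
      = trace ℂ (TotSpace β) (totHom θ' ∘ₗ dTot V W φ) := by
    rw [pA_apply, totHom_eq_sum, sumL_comp, map_sum]
    refine Finset.sum_congr rfl fun i _ => ?_
    rw [dMap_apply]
    have h1 : θ' i ∘ₗ prj γ i ∘ₗ dTot V W φ ∘ₗ sing β i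
        = (θ' i ∘ₗ prj γ i ∘ₗ dTot V W φ) ∘ₗ sing β i := by
      rw [comp_assoc, comp_assoc]
    rw [h1, trace_comp_comm' (sing β i) (θ' i ∘ₗ prj γ i ∘ₗ dTot V W φ)]
    congr 1
  rw [hL]
  unfold dTot
  rw [comp_sumL, map_sum, pB_apply]
  refine Finset.sum_congr rfl fun a _ => ?_
  rw [comp_add, comp_sub, comp_sub, map_add, map_sub, map_sub]
  erw [keyI1 W θ' a (φ (Sum.inl a)), keyI2 V θ' a (φ (Sum.inl a)),
    keyI3 W θ' a (φ (Sum.inr a)), keyI4 V θ' a (φ (Sum.inr a)),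
    trace_diag, trace_diag, trace_diag, trace_diag]
  erw [cMap_apply, cMap_apply, sub_comp, sub_comp, map_sub, map_sub]
  erw [trace_rot3 (n1 := β (Q.tgt a)) (n2 := β (Q.src a)) (n3 := γ (Q.tgt a))
      (Xc V (Sum.inr a)) (φ (Sum.inl a)) (θ' (Q.tgt a)),
    trace_rot3 (n1 := β (Q.src a)) (n2 := β (Q.tgt a)) (n3 := γ (Q.src a))
      (Xc V (Sum.inl a)) (φ (Sum.inr a)) (θ' (Q.src a))]
  simp only [dsrc_inl', dsrc_inr', dtgt_inl', dtgt_inr', comp_assoc]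
  abel

lemma dualMap_injective (V : PiRep Q lam β) (W : PiRep Q lam γ)
    (hV : V.IsSimple) (hW : W.IsSimple) (hniso : ¬ RepIso V W) :
    Function.Injective (dMap V W).dualMap := by
  rw [← LinearMap.ker_eq_bot, LinearMap.ker_eq_bot']
  intro ψ hψ
  obtain ⟨θ', rfl⟩ := pA_surjective ψ
  have hz : cMap W V θ' = 0 := by
    apply pB_eq_zero
    intro φ
    rw [← pA_dMap V W θ' φ]
    have := DFunLike.congr_fun hψ φ
    simpa using this
  have hinj : Function.Injective (cMap W V) :=
    cMap_injective W V hW hV (fun h => hniso (repIso_symm h))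
  have hθ' : θ' = 0 := hinj (by rw [hz, map_zero])
  rw [hθ', map_zero]

end

end Aux5
/-- If `V` and `W` are non-isomorphic simple representations of `Π_λ`
with dimension vectors `β` and `γ`, then `χ(β,γ) + χ(γ,β) ≤ 0`. -/
theorem statement5 {k : ℕ} (Q : FinQuiver k) (lam : Fin k → ℚ)
    (β γ : Fin k → ℕ) (V : PiRep Q lam β) (W : PiRep Q lam γ)
    (hV : V.IsSimple) (hW : W.IsSimple) (hniso : ¬ RepIso V W) :
    eulerN Q β γ + eulerN Q γ β ≤ 0 := by
  classical
  open LinearMap Module Aux5 in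
  have hcinj : Function.Injective (cMap V W) := cMap_injective V W hV hW hniso
  have hdinj : Function.Injective (dMap V W).dualMap := dualMap_injective V W hV hW hniso
  have h1 : finrank ℂ (LinearMap.range (dMap V W)) = finrank ℂ (HomSp β γ) := by
    rw [← LinearMap.finrank_range_dualMap_eq_finrank_range,
      LinearMap.finrank_range_of_inj hdinj, Subspace.dual_finrank_eq]
  have hdc : (dMap V W) ∘ₗ (cMap V W) = 0 := by
    refine LinearMap.ext fun θ => ?_
    funext i
    show prj γ i ∘ₗ dTot V W (cMap V W θ) ∘ₗ sing β i = _
    rw [dTot_cMap, LinearMap.zero_comp, LinearMap.comp_zero]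
    rfl
  have h2 : LinearMap.range (cMap V W) ≤ LinearMap.ker (dMap V W) :=
    LinearMap.range_le_ker_iff.mpr hdc
  have h3 := LinearMap.finrank_range_add_finrank_ker (dMap V W)
  have h4 : finrank ℂ (HomSp β γ) ≤ finrank ℂ (LinearMap.ker (dMap V W)) := by
    rw [← LinearMap.finrank_range_of_inj hcinj]
    exact Submodule.finrank_mono h2
  have h5 : finrank ℂ (HomSp β γ) + finrank ℂ (HomSp β γ) ≤ finrank ℂ (ESp Q β γ) := by
    omega
  have hA : finrank ℂ (HomSp β γ) = ∑ i, β i * γ i := by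
    rw [Module.finrank_pi_fintype]
    exact Finset.sum_congr rfl fun i _ => by
      rw [Module.finrank_linearMap, Module.finrank_fin_fun, Module.finrank_fin_fun]
  have hB : finrank ℂ (ESp Q β γ)
      = (∑ a : Q.Arrow, β (Q.src a) * γ (Q.tgt a))
        + ∑ a : Q.Arrow, β (Q.tgt a) * γ (Q.src a) := by
    rw [Module.finrank_pi_fintype, Fintype.sum_sum_type]
    congr 1
    · exact Finset.sum_congr rfl fun a _ => by
        rw [Module.finrank_linearMap, Module.finrank_fin_fun, Module.finrank_fin_fun,
          dsrc_inl', dtgt_inl']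
    · exact Finset.sum_congr rfl fun a _ => by
        rw [Module.finrank_linearMap, Module.finrank_fin_fun, Module.finrank_fin_fun,
          dsrc_inr', dtgt_inr']
  rw [hA, hB] at h5
  have h6 : ((∑ i, β i * γ i : ℕ) : ℤ) + ((∑ i, β i * γ i : ℕ) : ℤ)
      ≤ ((∑ a : Q.Arrow, β (Q.src a) * γ (Q.tgt a) : ℕ) : ℤ)
        + ((∑ a : Q.Arrow, β (Q.tgt a) * γ (Q.src a) : ℕ) : ℤ) := by
    exact_mod_cast h5
  unfold eulerN eulerZ
  push_cast at h6 ⊢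
  have e1 : ∑ i, (γ i : ℤ) * (β i : ℤ) = ∑ i, (β i : ℤ) * (γ i : ℤ) :=
    Finset.sum_congr rfl fun i _ => mul_comm _ _
  have e2 : ∑ a : Q.Arrow, (γ (Q.src a) : ℤ) * (β (Q.tgt a) : ℤ)
      = ∑ a : Q.Arrow, (β (Q.tgt a) : ℤ) * (γ (Q.src a) : ℤ) :=
    Finset.sum_congr rfl fun a _ => mul_comm _ _
  rw [e1, e2]
  linarith
end

section
/- Let β ∈ Σ_0 be the dimension vector of a simple representation of the preprojective algebra Π_0 of the quiver Q, and suppose p(β) = 1 − χ(β,β) > 0. Then there exist infinitely many pairwise non-isomorphic simple representations of Π_0 of dimension vector β. -/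
/-! ### Auxiliary infrastructure for the proof of Statement 11 -/

section Aux

open LinearMap

variable {k : ℕ}

/-- The projection onto the `i`-th component, as an endomorphism of the total space. -/
def projE (β : Fin k → ℕ) (i : Fin k) : TotSpace β →ₗ[ℂ] TotSpace β where
  toFun v := fun j => if j = i then v j else 0
  map_add' u v := by funext j; by_cases h : j = i <;> simp [h]
  map_smul' c v := by funext j; by_cases h : j = i <;> simp [h]

@[simp] lemma projE_apply (β : Fin k → ℕ) (i : Fin k) (v : TotSpace β) (j : Fin k) :
    projE β i v j = if j = i then v j else 0 := rfl

variable {Q : FinQuiver k} {lam : Fin k → ℚ} {β : Fin k → ℕ}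

/-- The generators of the algebra attached to a representation: the arrow maps
together with the vertex projections. -/
def genOp (R : PiRep Q lam β) : (Q.DArrow ⊕ Fin k) → Module.End ℂ (TotSpace β)
  | Sum.inl b => R.X b
  | Sum.inr i => projE β i

/-- Evaluation of a word in the generators. -/
def evalW (R : PiRep Q lam β) (l : List (Q.DArrow ⊕ Fin k)) : Module.End ℂ (TotSpace β) :=
  (l.map (genOp R)).prod

lemma evalW_nil (R : PiRep Q lam β) : evalW R [] = 1 := rfl

lemma evalW_cons (R : PiRep Q lam β) (γ : Q.DArrow ⊕ Fin k) (l : List (Q.DArrow ⊕ Fin k)) :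
    evalW R (γ :: l) = genOp R γ * evalW R l := by
  simp [evalW, List.prod_cons]

lemma evalW_append (R : PiRep Q lam β) (l l' : List (Q.DArrow ⊕ Fin k)) :
    evalW R (l ++ l') = evalW R l * evalW R l' := by
  simp [evalW, List.prod_append]

/-- A submodule of the total space stable under all generators is `⊥` or `⊤`
whenever the representation is simple. -/
lemma simple_translate (R : PiRep Q lam β) (hs : R.IsSimple) (M : Submodule ℂ (TotSpace β))
    (hstab : ∀ γ, ∀ v ∈ M, genOp R γ v ∈ M) : M = ⊥ ∨ M = ⊤ := by
  set U : (i : Fin k) → Submodule ℂ (Fin (β i) → ℂ) := fun i => M.map (LinearMap.proj i) with hU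
  have hInv : R.Invariant U := by
    intro b v hv
    obtain ⟨m, hm, hmv⟩ := hv
    have heq : R.X b v = R.X b m := R.X_src b v m (by simpa using hmv.symm)
    rw [heq]
    exact ⟨R.X b m, hstab (Sum.inl b) m hm, rfl⟩
  rcases hs U hInv with h | h
  · left
    rw [eq_bot_iff]; intro m hm
    rw [Submodule.mem_bot]
    funext i
    have hi : m i ∈ U i := ⟨m, hm, rfl⟩
    rw [h i] at hi
    simpa using hi
  · right
    rw [eq_top_iff]; intro v _
    have hproj : ∀ i, genOp R (Sum.inr i) v ∈ M := by
      intro i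
      have hvi : v i ∈ U i := by rw [h i]; trivial
      obtain ⟨m, hm, hmv⟩ := hvi
      have hmv' : m i = v i := by simpa using hmv
      have heq : genOp R (Sum.inr i) v = genOp R (Sum.inr i) m := by
        funext j
        show (if j = i then v j else 0) = (if j = i then m j else 0)
        by_cases hj : j = i
        · subst hj; simp [hmv']
        · simp [hj]
      rw [heq]; exact hstab _ m hm
    have hdecomp : v = ∑ i : Fin k, genOp R (Sum.inr i) v := by
      funext j
      rw [Finset.sum_apply]
      show v j = ∑ i : Fin k, (if j = i then v j else 0)
      simp
    rw [hdecomp]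
    exact Submodule.sum_mem M fun i _ => hproj i

end Aux
section Spectral

open Polynomial in
/-- A Vandermonde-type argument: if all weighted power sums (with exponent `≥ 1`) vanish,
then the coefficient at any nonzero point vanishes. -/
lemma vand_coeff_zero {s : Finset ℂ} (c : ℂ → ℂ)
    (h : ∀ n : ℕ, 1 ≤ n → ∑ μ ∈ s, c μ * μ ^ n = 0)
    {μ₀ : ℂ} (hμ₀s : μ₀ ∈ s) (hμ₀ : μ₀ ≠ 0) : c μ₀ = 0 := by
  classical
  set P : Polynomial ℂ := Polynomial.X * ∏ ν ∈ s.erase μ₀, (Polynomial.X - Polynomial.C ν)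
    with hP
  have hP0 : P.coeff 0 = 0 := by simp [hP, Polynomial.mul_coeff_zero]
  have hsum : ∑ μ ∈ s, c μ * P.eval μ = 0 := by
    have h1 : ∑ μ ∈ s, c μ * P.eval μ
        = ∑ μ ∈ s, ∑ n ∈ Finset.range (P.natDegree + 1), P.coeff n * (c μ * μ ^ n) := by
      refine Finset.sum_congr rfl fun μ _ => ?_
      rw [Polynomial.eval_eq_sum_range, Finset.mul_sum]
      exact Finset.sum_congr rfl fun n _ => by ring
    rw [h1, Finset.sum_comm]
    refine Finset.sum_eq_zero fun n _ => ?_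
    rw [← Finset.mul_sum]
    rcases Nat.eq_zero_or_pos n with h0 | h1
    · rw [h0, hP0, zero_mul]
    · rw [h n h1, mul_zero]
  have hzero : ∀ ν ∈ s, ν ≠ μ₀ → c ν * P.eval ν = 0 := by
    intro ν hν hne
    have hz : Polynomial.eval ν (Polynomial.X - Polynomial.C ν) = 0 := by simp
    have : P.eval ν = 0 := by
      rw [hP, Polynomial.eval_mul, Polynomial.eval_prod,
        Finset.prod_eq_zero (Finset.mem_erase.mpr ⟨hne, hν⟩) hz, mul_zero]
    rw [this, mul_zero]
  have hsingle : c μ₀ * P.eval μ₀ = 0 :=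
    (Finset.sum_eq_single_of_mem μ₀ hμ₀s (fun b hb hne => hzero b hb hne)).symm.trans hsum
  have hPne : P.eval μ₀ ≠ 0 := by
    rw [hP, Polynomial.eval_mul, Polynomial.eval_X, Polynomial.eval_prod]
    refine mul_ne_zero hμ₀ ?_
    rw [Finset.prod_ne_zero_iff]
    intro ν hν
    simp only [Polynomial.eval_sub, Polynomial.eval_X, Polynomial.eval_C]
    exact sub_ne_zero.mpr (Ne.symm (Finset.ne_of_mem_erase hν))
  exact (mul_eq_zero.mp hsingle).resolve_right hPne

/-- An endomorphism of a nonzero finite-dimensional complex vector space which fixes a nonzero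
vector cannot have all traces of its positive powers equal to zero. -/
lemma no_eigen_one {V : Type} [AddCommGroup V] [Module ℂ V] [FiniteDimensional ℂ V]
    (w : Module.End ℂ V)
    (htr : ∀ n : ℕ, 1 ≤ n → LinearMap.trace ℂ V (w ^ n) = 0)
    (v : V) (hv : v ≠ 0) (hwv : w v = v) : False := by
  classical
  have hind := Module.End.independent_maxGenEigenspace w
  have hsup : ⨆ μ, w.maxGenEigenspace μ = ⊤ := Module.End.iSup_maxGenEigenspace_eq_top w
  have hfin : {μ : ℂ | w.maxGenEigenspace μ ≠ ⊥}.Finite :=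
    WellFoundedGT.finite_ne_bot_of_iSupIndep hind
  have hds := DirectSum.isInternal_submodule_of_iSupIndep_of_iSup_eq_top hind hsup
  have hmt : ∀ μ : ℂ, Set.MapsTo w (w.maxGenEigenspace μ) (w.maxGenEigenspace μ) :=
    fun μ => w.mapsTo_maxGenEigenspace_of_comm rfl μ
  have hmtn : ∀ (n : ℕ) (μ : ℂ),
      Set.MapsTo (w ^ n) (w.maxGenEigenspace μ) (w.maxGenEigenspace μ) :=
    fun n μ => w.mapsTo_maxGenEigenspace_of_comm ((Commute.refl w).pow_right n) μ
  have htrres : ∀ (μ : ℂ) (n : ℕ),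
      LinearMap.trace ℂ _ ((w ^ n).restrict (hmtn n μ))
        = μ ^ n * (Module.finrank ℂ (w.maxGenEigenspace μ) : ℂ) := by
    intro μ n
    have key : ∀ m : ℕ, LinearMap.trace ℂ _ ((w.restrict (hmt μ)) ^ m)
        = μ ^ m * (Module.finrank ℂ (w.maxGenEigenspace μ) : ℂ) := by
      intro m
      induction m with
      | zero => simp [LinearMap.trace_one]
      | succ m ih =>
        rw [pow_succ, Module.End.mul_eq_comp,
          LinearMap.trace_comp_eq_mul_of_commute_of_isNilpotent μ ((Commute.refl _).pow_left m)
            (w.isNilpotent_restrict_maxGenEigenspace_sub_algebraMap μ), ih]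
        ring
    have hres : (w ^ n).restrict (hmtn n μ) = (w.restrict (hmt μ)) ^ n :=
      (Module.End.pow_restrict n (hmt μ)).symm
    rw [hres]
    exact key n
  have hsum : ∀ n : ℕ, 1 ≤ n →
      ∑ μ ∈ hfin.toFinset, (Module.finrank ℂ (w.maxGenEigenspace μ) : ℂ) * μ ^ n = 0 := by
    intro n hn
    have ht := LinearMap.trace_eq_sum_trace_restrict' hds hfin (fun μ => hmtn n μ)
    rw [htr n hn] at ht
    have : ∑ μ ∈ hfin.toFinset, (Module.finrank ℂ (w.maxGenEigenspace μ) : ℂ) * μ ^ n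
        = ∑ μ ∈ hfin.toFinset,
            LinearMap.trace ℂ _ ((w ^ n).restrict (hmtn n μ)) := by
      refine Finset.sum_congr rfl fun μ _ => ?_
      rw [htrres]; ring
    rw [this, ← ht]
  have h1 : (1 : ℂ) ∈ hfin.toFinset := by
    rw [Set.Finite.mem_toFinset]
    show w.maxGenEigenspace 1 ≠ ⊥
    intro hbot
    have hv1 : v ∈ w.maxGenEigenspace 1 := by
      rw [Module.End.mem_maxGenEigenspace]
      exact ⟨1, by simp [hwv]⟩
    rw [hbot] at hv1
    exact hv (by simpa using hv1)
  have hz := vand_coeff_zero (fun μ => (Module.finrank ℂ (w.maxGenEigenspace μ) : ℂ))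
    hsum h1 one_ne_zero
  rw [Nat.cast_eq_zero, Submodule.finrank_eq_zero] at hz
  rw [Set.Finite.mem_toFinset] at h1
  exact h1 hz

end Spectral
section Dichotomy

variable {k : ℕ} {Q : FinQuiver k} {lam : Fin k → ℚ} {β : Fin k → ℕ}

/-- If a simple representation has some nonzero arrow map, then some word in the generators
containing at least one arrow letter has nonzero trace. -/
lemma exists_word_trace_ne_zero (R : PiRep Q lam β) (hs : R.IsSimple) (b₀ : Q.DArrow)
    (hb : R.X b₀ ≠ 0) :
    ∃ l : List (Q.DArrow ⊕ Fin k), 1 ≤ l.countP (fun γ => γ.isLeft) ∧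
      LinearMap.trace ℂ (TotSpace β) (evalW R l) ≠ 0 := by
  classical
  by_contra hcon
  push_neg at hcon
  obtain ⟨v₀, hv₀⟩ : ∃ v, R.X b₀ v ≠ 0 := by
    by_contra h; push_neg at h; exact hb (LinearMap.ext h)
  set S : Set (Module.End ℂ (TotSpace β)) :=
    {f | ∃ l : List (Q.DArrow ⊕ Fin k), 1 ≤ l.countP (fun γ => γ.isLeft) ∧ evalW R l = f}
    with hS
  set W := Submodule.span ℂ S with hW
  have hXb₀ : R.X b₀ ∈ S := by
    refine ⟨[Sum.inl b₀], by simp, ?_⟩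
    simp [evalW, genOp]
  have htr : ∀ f ∈ W, LinearMap.trace ℂ (TotSpace β) f = 0 := by
    intro f hf
    have hle : W ≤ LinearMap.ker (LinearMap.trace ℂ (TotSpace β)) := by
      rw [hW]
      refine Submodule.span_le.mpr ?_
      rintro f ⟨l, hl, rfl⟩
      exact hcon l hl
    exact hle hf
  have hcnt_cons : ∀ (γ : Q.DArrow ⊕ Fin k) (l : List (Q.DArrow ⊕ Fin k)),
      l.countP (fun γ => γ.isLeft) ≤ (γ :: l).countP (fun γ => γ.isLeft) := by
    intro γ l
    rw [List.countP_cons]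
    omega
  have hmul_gen : ∀ γ, ∀ f ∈ W, genOp R γ * f ∈ W := by
    intro γ f hf
    refine Submodule.span_induction ?_ ?_ ?_ ?_ hf
    · rintro f ⟨l, hl, rfl⟩
      refine Submodule.subset_span ⟨γ :: l, le_trans hl (hcnt_cons γ l), ?_⟩
      rw [evalW_cons]
    · simpa using W.zero_mem
    · intro x y _ _ hx' hy'
      rw [mul_add]; exact W.add_mem hx' hy'
    · intro c x _ hx'
      rw [mul_smul_comm]; exact W.smul_mem c hx'
  have hmulW : ∀ f ∈ W, ∀ g ∈ W, f * g ∈ W := by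
    intro f hf
    refine Submodule.span_induction (p := fun f _ => ∀ g ∈ W, f * g ∈ W) ?_ ?_ ?_ ?_ hf
    · rintro f ⟨l, hl, rfl⟩ g hg
      refine Submodule.span_induction ?_ ?_ ?_ ?_ hg
      · rintro g ⟨l', _, rfl⟩
        refine Submodule.subset_span ⟨l ++ l', ?_, evalW_append R l l'⟩
        rw [List.countP_append]
        omega
      · simpa using W.zero_mem
      · intro x y _ _ hx' hy'
        rw [mul_add]; exact W.add_mem hx' hy'
      · intro c x _ hx'
        rw [mul_smul_comm]; exact W.smul_mem c hx'
    · intro g hg; simpa using W.zero_mem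
    · intro x y _ _ hx' hy' g hg
      rw [add_mul]; exact W.add_mem (hx' g hg) (hy' g hg)
    · intro c x _ hx' g hg
      rw [smul_mul_assoc]; exact W.smul_mem c (hx' g hg)
  have hpow : ∀ f ∈ W, ∀ n : ℕ, f ^ (n + 1) ∈ W := by
    intro f hf n
    induction n with
    | zero => simpa [pow_one] using hf
    | succ m ih => rw [pow_succ]; exact hmulW _ ih _ hf
  let evalAt : (TotSpace β →ₗ[ℂ] TotSpace β) →ₗ[ℂ] TotSpace β :=
    { toFun := fun f => f v₀, map_add' := fun f g => rfl, map_smul' := fun c f => rfl }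
  set M := W.map evalAt with hM
  have hMstab : ∀ γ, ∀ v ∈ M, genOp R γ v ∈ M := by
    rintro γ v ⟨f, hf, rfl⟩
    exact ⟨genOp R γ * f, hmul_gen γ f hf, rfl⟩
  have hMne : M ≠ ⊥ := by
    intro h
    have hmem : R.X b₀ v₀ ∈ M := ⟨R.X b₀, Submodule.subset_span hXb₀, rfl⟩
    rw [h] at hmem
    exact hv₀ (by simpa using hmem)
  rcases simple_translate R hs M hMstab with h | h
  · exact hMne h
  · have hv₀M : v₀ ∈ M := h ▸ Submodule.mem_top
    obtain ⟨w, hw, hwv⟩ := hv₀M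
    have hwv : w v₀ = v₀ := hwv
    have hpowv : ∀ n : ℕ, (w ^ (n + 1)) v₀ = v₀ := by
      intro n
      induction n with
      | zero => simpa [pow_one] using hwv
      | succ m ih =>
        rw [pow_succ]
        show (w ^ (m + 1)) (w v₀) = v₀
        rw [hwv]; exact ih
    have hv₀ne : v₀ ≠ 0 := by
      intro h0; exact hv₀ (by rw [h0]; simp)
    refine no_eigen_one w ?_ v₀ hv₀ne hwv
    intro n hn
    obtain ⟨m, rfl⟩ : ∃ m, n = m + 1 := ⟨n - 1, by omega⟩
    exact htr _ (hpow w hw m)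

end Dichotomy
section Scaling

variable {k : ℕ} {Q : FinQuiver k} {β : Fin k → ℕ}

/-- Scaling all arrow maps of a representation of `Π_0` by `t`. -/
noncomputable def scaleRep (R : PiRep Q (0 : Fin k → ℚ) β) (t : ℂ) : PiRep Q (0 : Fin k → ℚ) β where
  X b := t • R.X b
  X_tgt b v i hi := by simp [R.X_tgt b v i hi]
  X_src b v w h := by simp [R.X_src b v w h]
  relation v i := by
    have h := R.relation v i
    simp only [Pi.zero_apply, Rat.cast_zero, zero_smul] at h ⊢
    have e1 : ∀ a : Q.Arrow, ((t • R.X (Sum.inl a)) ((t • R.X (Sum.inr a)) v)) i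
        = (t * t) • (R.X (Sum.inl a) (R.X (Sum.inr a) v)) i := by
      intro a
      simp [LinearMap.smul_apply, map_smul, smul_smul]
    have e2 : ∀ a : Q.Arrow, ((t • R.X (Sum.inr a)) ((t • R.X (Sum.inl a)) v)) i
        = (t * t) • (R.X (Sum.inr a) (R.X (Sum.inl a) v)) i := by
      intro a
      simp [LinearMap.smul_apply, map_smul, smul_smul]
    calc (∑ a : Q.Arrow, ((t • R.X (Sum.inl a)) ((t • R.X (Sum.inr a)) v)) i)
          - ∑ a : Q.Arrow, ((t • R.X (Sum.inr a)) ((t • R.X (Sum.inl a)) v)) i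
        = (t * t) • ((∑ a : Q.Arrow, (R.X (Sum.inl a) (R.X (Sum.inr a) v)) i)
            - ∑ a : Q.Arrow, (R.X (Sum.inr a) (R.X (Sum.inl a) v)) i) := by
          rw [smul_sub, Finset.smul_sum, Finset.smul_sum]
          rw [Finset.sum_congr rfl fun a _ => e1 a, Finset.sum_congr rfl fun a _ => e2 a]
      _ = 0 := by rw [h, smul_zero]

lemma scaleRep_isSimple (R : PiRep Q (0 : Fin k → ℚ) β) (hs : R.IsSimple) {t : ℂ}
    (ht : t ≠ 0) : (scaleRep R t).IsSimple := by
  intro U hU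
  refine hs U ?_
  intro b v hv
  have h1 := hU b v hv
  have h2 : (scaleRep R t).X b v (Q.dtgt b) = t • (R.X b v (Q.dtgt b)) := by
    simp [scaleRep]
  rw [h2] at h1
  have h3 := (U (Q.dtgt b)).smul_mem t⁻¹ h1
  rwa [smul_smul, inv_mul_cancel₀ ht, one_smul] at h3

lemma evalW_scaleRep (R : PiRep Q (0 : Fin k → ℚ) β) (t : ℂ)
    (l : List (Q.DArrow ⊕ Fin k)) :
    evalW (scaleRep R t) l = t ^ (l.countP (fun γ => γ.isLeft)) • evalW R l := by
  induction l with
  | nil => simp [evalW]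
  | cons γ l ih =>
    rw [evalW_cons, evalW_cons, ih]
    cases γ with
    | inl b =>
      have hg : genOp (scaleRep R t) (Sum.inl b) = t • genOp R (Sum.inl b) := rfl
      rw [hg, List.countP_cons_of_pos (p := fun γ => γ.isLeft) (a := Sum.inl b) (by simp), smul_mul_assoc, mul_smul_comm, smul_smul,
        ← pow_succ']
    | inr i =>
      have hg : genOp (scaleRep R t) (Sum.inr i) = genOp R (Sum.inr i) := rfl
      rw [hg, List.countP_cons_of_neg (p := fun γ => γ.isLeft) (a := Sum.inr i) (by simp), mul_smul_comm]

/-- Isomorphic representations have the same word traces. -/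
lemma trace_evalW_eq_of_repIso {R S : PiRep Q (0 : Fin k → ℚ) β} (h : RepIso R S)
    (l : List (Q.DArrow ⊕ Fin k)) :
    LinearMap.trace ℂ (TotSpace β) (evalW S l) = LinearMap.trace ℂ (TotSpace β) (evalW R l) := by
  obtain ⟨g, hg⟩ := h
  set G : TotSpace β ≃ₗ[ℂ] TotSpace β := LinearEquiv.piCongrRight g with hG
  have hGapp : ∀ u : TotSpace β, G u = fun j => g j (u j) := fun u => rfl
  have hcomm : ∀ γ (v : TotSpace β), genOp S γ (G v) = G (genOp R γ v) := by
    intro γ v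
    cases γ with
    | inl b =>
      have := hg b v
      funext i
      exact hg b v i
    | inr i₀ =>
      funext i
      show projE β i₀ (G v) i = g i (projE β i₀ v i)
      by_cases hi : i = i₀ <;> simp [hGapp, hi]
  have hev : ∀ (l : List (Q.DArrow ⊕ Fin k)) (v : TotSpace β),
      evalW S l (G v) = G (evalW R l v) := by
    intro l
    induction l with
    | nil => intro v; simp [evalW]
    | cons γ l ih =>
      intro v
      rw [evalW_cons, evalW_cons, Module.End.mul_apply, Module.End.mul_apply, ih, hcomm]
  have hconj : evalW S l = G.conj (evalW R l) := by
    refine LinearMap.ext fun v => ?_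
    conv_lhs => rw [← G.apply_symm_apply v]
    rw [hev]
    simp [LinearEquiv.conj_apply]
  rw [hconj, LinearMap.trace_conj']

lemma repIso_refl (R : PiRep Q (0 : Fin k → ℚ) β) : RepIso R R :=
  ⟨fun i => LinearEquiv.refl ℂ _, fun b v i => rfl⟩

end Scaling
section Degenerate

lemma subm_eq_bot' {n : ℕ} (hn : n = 0) (U : Submodule ℂ (Fin n → ℂ)) : U = ⊥ := by
  subst hn
  have hv : ∀ v : Fin 0 → ℂ, v = 0 := fun v => funext fun x => x.elim0
  rw [eq_bot_iff]
  intro v _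
  rw [Submodule.mem_bot]
  exact hv v

lemma subm_eq_top' {n : ℕ} (hn : n = 0) (U : Submodule ℂ (Fin n → ℂ)) : U = ⊤ := by
  subst hn
  have hv : ∀ v : Fin 0 → ℂ, v = 0 := fun v => funext fun x => x.elim0
  rw [eq_top_iff]
  intro v _
  rw [hv v]
  exact U.zero_mem

lemma subm_dim_one {n : ℕ} (hn : n = 1) (U : Submodule ℂ (Fin n → ℂ)) (h : U ≠ ⊥) : U = ⊤ := by
  subst hn
  obtain ⟨u, huU, hu0⟩ := (Submodule.ne_bot_iff U).mp h
  have hu00 : u 0 ≠ 0 := by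
    intro h0
    exact hu0 (funext fun x => by rw [Fin.eq_zero x]; exact h0)
  rw [eq_top_iff]
  intro v _
  have hveq : v = (v 0 * (u 0)⁻¹) • u := by
    funext x
    rw [Fin.eq_zero x]
    show v 0 = v 0 * (u 0)⁻¹ * u 0
    rw [mul_assoc, inv_mul_cancel₀ hu00, mul_one]
  rw [hveq]
  exact U.smul_mem _ huU

lemma top_ne_bot' {n : ℕ} (hn : n ≠ 0) : (⊤ : Submodule ℂ (Fin n → ℂ)) ≠ ⊥ := by
  intro h
  have h1 : ((fun _ => (1 : ℂ)) : Fin n → ℂ) ∈ (⊤ : Submodule ℂ (Fin n → ℂ)) := trivial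
  rw [h, Submodule.mem_bot] at h1
  have := congrFun h1 ⟨0, Nat.pos_of_ne_zero hn⟩
  simpa using this

variable {k : ℕ} {Q : FinQuiver k} {β : Fin k → ℕ}

lemma degenerate_case (R : PiRep Q (0 : Fin k → ℚ) β) (hs : R.IsSimple)
    (hX : ∀ b, R.X b = 0) (hβ : β ≠ 0) :
    ∃ i₀, β i₀ = 1 ∧ ∀ j, j ≠ i₀ → β j = 0 := by
  classical
  have hInvAll : ∀ U, R.Invariant U := by
    intro U b v _
    rw [hX b]
    simpa using (U (Q.dtgt b)).zero_mem
  obtain ⟨i₀, hi₀⟩ := Function.ne_iff.mp hβ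
  have hi₀ : β i₀ ≠ 0 := hi₀
  have h0 : ∀ j, j ≠ i₀ → β j = 0 := by
    intro j hj
    by_contra hbj
    set U : (i : Fin k) → Submodule ℂ (Fin (β i) → ℂ) :=
      fun i => if i = i₀ then ⊤ else ⊥ with hUdef
    rcases hs U (hInvAll U) with h | h
    · have hh := h i₀
      rw [hUdef] at hh
      simp only [if_pos rfl] at hh
      exact top_ne_bot' hi₀ hh
    · have hh := h j
      rw [hUdef] at hh
      simp only [if_neg hj] at hh
      exact top_ne_bot' hbj hh.symm
  refine ⟨i₀, ?_, h0⟩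
  rcases Nat.lt_or_ge (β i₀) 2 with hlt | hge
  · omega
  · exfalso
    set e0 : (i : Fin k) → (Fin (β i) → ℂ) := fun i x => if (x : ℕ) = 0 then 1 else 0 with he0
    set U : (i : Fin k) → Submodule ℂ (Fin (β i) → ℂ) := fun i => Submodule.span ℂ {e0 i}
      with hUdef
    rcases hs U (hInvAll U) with h | h
    · have h00 : e0 i₀ ∈ U i₀ := Submodule.mem_span_singleton_self _
      rw [h i₀, Submodule.mem_bot] at h00
      have := congrFun h00 ⟨0, by omega⟩
      simp [he0] at this
    · have h11 : ((fun x : Fin (β i₀) => if (x : ℕ) = 1 then (1 : ℂ) else 0)) ∈ U i₀ := by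
        rw [h i₀]; trivial
      rw [hUdef, Submodule.mem_span_singleton] at h11
      obtain ⟨c, hc⟩ := h11
      have := congrFun hc ⟨1, by omega⟩
      simp [he0] at this

lemma exists_loop (hp : 0 < pN Q β) (i₀ : Fin k) (h1 : β i₀ = 1)
    (h0 : ∀ j, j ≠ i₀ → β j = 0) :
    ∃ a : Q.Arrow, Q.src a = i₀ ∧ Q.tgt a = i₀ := by
  by_contra hno
  push_neg at hno
  have hsq : (∑ i : Fin k, (β i : ℤ) * (β i)) = 1 := by
    rw [Finset.sum_eq_single_of_mem i₀ (Finset.mem_univ _)]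
    · rw [h1]; norm_num
    · intro j _ hj; rw [h0 j hj]; norm_num
  have hpr : (∑ a : Q.Arrow, (β (Q.src a) : ℤ) * (β (Q.tgt a))) = 0 := by
    refine Finset.sum_eq_zero fun a _ => ?_
    by_cases hsa : Q.src a = i₀
    · rw [h0 (Q.tgt a) (hno a hsa)]; norm_num
    · rw [h0 (Q.src a) hsa]; norm_num
  have hzero : pN Q β = 0 := by
    simp [pN, eulerN, eulerZ, hsq, hpr]
  omega

/-- The family of one-dimensional representations supported on a loop. -/
noncomputable def loopRep (i₀ : Fin k) (a₀ : Q.Arrow) (hsrc : Q.src a₀ = i₀)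
    (htgt : Q.tgt a₀ = i₀) (t : ℂ) : PiRep Q (0 : Fin k → ℚ) β :=
  letI : DecidableEq Q.DArrow := Classical.decEq _
  { X := fun b => if b = Sum.inl a₀ then t • projE β i₀ else 0
    X_tgt := by
      intro b v i hi
      by_cases hb : b = Sum.inl a₀
      · subst hb
        have hi' : i ≠ i₀ := by
          intro h; exact hi (h.trans htgt.symm)
        show (if (Sum.inl a₀ : Q.DArrow) = Sum.inl a₀ then t • projE β i₀
          else (0 : TotSpace β →ₗ[ℂ] TotSpace β)) v i = 0
        rw [if_pos rfl]
        show (t • (projE β i₀ v)) i = 0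
        rw [Pi.smul_apply, projE_apply, if_neg hi', smul_zero]
      · show (if b = Sum.inl a₀ then t • projE β i₀
          else (0 : TotSpace β →ₗ[ℂ] TotSpace β)) v i = 0
        rw [if_neg hb]; simp
    X_src := by
      intro b v w h
      by_cases hb : b = Sum.inl a₀
      · subst hb
        have h' : v i₀ = w i₀ := by
          have : Q.dsrc (Sum.inl a₀) = i₀ := hsrc
          rw [this] at h; exact h
        show (if (Sum.inl a₀ : Q.DArrow) = Sum.inl a₀ then t • projE β i₀
            else (0 : TotSpace β →ₗ[ℂ] TotSpace β)) v
          = (if (Sum.inl a₀ : Q.DArrow) = Sum.inl a₀ then t • projE β i₀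
            else (0 : TotSpace β →ₗ[ℂ] TotSpace β)) w
        rw [if_pos rfl]
        show t • (projE β i₀ v) = t • (projE β i₀ w)
        congr 1
        funext j
        rw [projE_apply, projE_apply]
        by_cases hj : j = i₀
        · subst hj; simp [h']
        · simp [hj]
      · show (if b = Sum.inl a₀ then t • projE β i₀
            else (0 : TotSpace β →ₗ[ℂ] TotSpace β)) v
          = (if b = Sum.inl a₀ then t • projE β i₀
            else (0 : TotSpace β →ₗ[ℂ] TotSpace β)) w
        rw [if_neg hb]
        simp
    relation := by
      intro v i
      letI : DecidableEq Q.DArrow := Classical.decEq _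
      have h2 : ∀ a : Q.Arrow,
          (if (Sum.inr a : Q.DArrow) = Sum.inl a₀ then t • projE β i₀
            else (0 : TotSpace β →ₗ[ℂ] TotSpace β)) = 0 :=
        fun a => if_neg (by simp)
      simp [h2] }

lemma loopRep_isSimple (i₀ : Fin k) (a₀ : Q.Arrow) (hsrc : Q.src a₀ = i₀)
    (htgt : Q.tgt a₀ = i₀) (h1 : β i₀ = 1) (h0 : ∀ j, j ≠ i₀ → β j = 0) (t : ℂ) :
    (loopRep (β := β) i₀ a₀ hsrc htgt t).IsSimple := by
  intro U _
  by_cases hbot : U i₀ = ⊥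
  · left
    intro i
    by_cases hi : i = i₀
    · subst hi; exact hbot
    · exact subm_eq_bot' (h0 i hi) _
  · right
    intro i
    by_cases hi : i = i₀
    · subst hi; exact subm_dim_one h1 _ hbot
    · exact subm_eq_top' (h0 i hi) _

lemma loopRep_not_iso (i₀ : Fin k) (a₀ : Q.Arrow) (hsrc : Q.src a₀ = i₀)
    (htgt : Q.tgt a₀ = i₀) (h1 : β i₀ = 1) (t s : ℂ) (hts : t ≠ s) :
    ¬ RepIso (loopRep (β := β) i₀ a₀ hsrc htgt t) (loopRep (β := β) i₀ a₀ hsrc htgt s) := by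
  classical
  rintro ⟨g, hg⟩
  set v : TotSpace β := fun _ _ => 1 with hvdef
  have hv := hg (Sum.inl a₀) v i₀
  have hXt : (loopRep (β := β) i₀ a₀ hsrc htgt t).X (Sum.inl a₀) = t • projE β i₀ :=
    if_pos rfl
  have hXs : (loopRep (β := β) i₀ a₀ hsrc htgt s).X (Sum.inl a₀) = s • projE β i₀ :=
    if_pos rfl
  rw [hXt, hXs] at hv
  simp only [LinearMap.smul_apply, Pi.smul_apply, projE_apply, if_pos rfl, if_true, eq_self_iff_true, map_smul] at hv
  have hgne : g i₀ (v i₀) ≠ 0 := by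
    rw [LinearEquiv.map_ne_zero_iff]
    intro h0
    have := congrFun h0 ⟨0, by omega⟩
    simpa [hvdef] using this
  have : (s - t) • g i₀ (v i₀) = 0 := by
    rw [sub_smul, hv, sub_self]
  rcases smul_eq_zero.mp this with h | h
  · exact hts (sub_eq_zero.mp h).symm
  · exact hgne h

end Degenerate
/-- If `β ∈ Σ_0` and `p(β) > 0`, then there are infinitely many
pairwise non-isomorphic simple representations of `Π_0` of dimension vector `β`. -/
theorem statement11 {k : ℕ} (Q : FinQuiver k) (β : Fin k → ℕ)
    (hβ : β ∈ SigmaSet Q (0 : Fin k → ℚ)) (hp : 0 < pN Q β) :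
    ∃ 𝒮 : Set (PiRep Q (0 : Fin k → ℚ) β), 𝒮.Infinite ∧
      (∀ R ∈ 𝒮, R.IsSimple) ∧
      (∀ R ∈ 𝒮, ∀ R' ∈ 𝒮, R ≠ R' → ¬ RepIso R R') := by
  classical
  obtain ⟨hβne, R, hRs⟩ := hβ
  by_cases hX : ∀ b, R.X b = 0
  · -- degenerate case: `β` is a vertex simple with a loop
    obtain ⟨i₀, h1, h0⟩ := degenerate_case R hRs hX hβne
    obtain ⟨a₀, hsrc, htgt⟩ := exists_loop hp i₀ h1 h0
    refine ⟨Set.range (fun t : ℂ => loopRep (β := β) i₀ a₀ hsrc htgt t), ?_, ?_, ?_⟩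
    · apply Set.infinite_range_of_injective
      intro t s hts
      by_contra hne
      exact loopRep_not_iso i₀ a₀ hsrc htgt h1 t s hne (by rw [show loopRep (β := β) i₀ a₀ hsrc htgt t = loopRep (β := β) i₀ a₀ hsrc htgt s from hts]; exact repIso_refl _)
    · rintro R' ⟨t, rfl⟩
      exact loopRep_isSimple i₀ a₀ hsrc htgt h1 h0 t
    · rintro _ ⟨t, rfl⟩ _ ⟨s, rfl⟩ hne hiso
      have hts : t ≠ s := fun h => hne (by rw [h])
      exact loopRep_not_iso i₀ a₀ hsrc htgt h1 t s hts hiso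
  · push_neg at hX
    obtain ⟨b₀, hb₀⟩ := hX
    obtain ⟨l₀, hl₀, hc⟩ := exists_word_trace_ne_zero R hRs b₀ hb₀
    have hnoniso : ∀ t s : ℝ, 0 < t → 0 < s → t ≠ s →
        ¬ RepIso (scaleRep R (t : ℂ)) (scaleRep R (s : ℂ)) := by
      intro t s hts hss hne hiso
      have h := trace_evalW_eq_of_repIso hiso l₀
      rw [evalW_scaleRep, evalW_scaleRep, map_smul, map_smul, smul_eq_mul, smul_eq_mul] at h
      have hpow : ((s : ℂ)) ^ (l₀.countP (fun γ => γ.isLeft))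
          = ((t : ℂ)) ^ (l₀.countP (fun γ => γ.isLeft)) := mul_right_cancel₀ hc h
      have hr : s ^ (l₀.countP (fun γ => γ.isLeft)) = t ^ (l₀.countP (fun γ => γ.isLeft)) := by
        exact_mod_cast hpow
      have hm : l₀.countP (fun γ => γ.isLeft) ≠ 0 := by omega
      rcases lt_trichotomy t s with h' | h' | h'
      · exact (pow_lt_pow_left₀ h' hts.le hm).ne' hr
      · exact hne h'
      · exact (pow_lt_pow_left₀ h' hss.le hm).ne hr
    refine ⟨(fun t : ℝ => scaleRep R (t : ℂ)) '' Set.Ioi 0, ?_, ?_, ?_⟩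
    · refine Set.Infinite.image ?_ (Set.Ioi_infinite 0)
      intro t ht s hs hts
      by_contra hne
      exact hnoniso t s ht hs hne (by rw [show scaleRep R (t : ℂ) = scaleRep R (s : ℂ) from hts]; exact repIso_refl _)
    · rintro R' ⟨t, ht, rfl⟩
      refine scaleRep_isSimple R hRs ?_
      exact_mod_cast (ne_of_gt ht)
    · rintro _ ⟨t, ht, rfl⟩ _ ⟨s, hs, rfl⟩ hne hiso
      exact hnoniso t s ht hs (fun h => hne (by rw [h])) hiso
end
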